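/- arXiv:2303.07941 — 7 statements merged into one kernel-verified Lean document; each statement's English description precedes it below -/
import Mathlib

section
/- Let U : (0,∞) → ℝ be increasing, strictly concave, twice continuously differentiable, satisfying the Inada conditions U'(0+) = ∞ and U'(∞) = 0, and suppose there is r > 0 such that RRA[U](x) ≥ r for all x > 0. Then there exist constants δ > 0 and K₁, K₂ > 0 such that the conjugate function satisfies Ũ(y) < K₁·y^{−δ} + K₂ for all y > 0. -/
/-- Relative risk aversion of a utility function `U` at `x`: `RRA[U](x) = -x·U''(x)/U'(x)`. -/
noncomputable def RRA (U : ℝ → ℝ) (x : ℝ) : ℝ := -x * deriv (deriv U) x / deriv U x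

/-- The conjugate function `Ũ(y) = sup_{x>0} [U(x) − x·y]`. -/
noncomputable def conj (U : ℝ → ℝ) (y : ℝ) : ℝ := sSup ((fun x => U x - x * y) '' Set.Ioi 0)

/-!
A relative risk aversion of at least `r` makes `x ↦ U'(x) x^r` nonincreasing, so
`U'(x) ≤ U'(1) x^{-r}` for `x ≥ 1` and `U` grows at most like `x^{1-r}` (we may take `r < 1`).
Splitting at `x^r = c/y` shows `c x^{1-r} - x y ≤ c (c/y)^{(1-r)/r}`, which bounds `Ũ` with
`δ = (1 - r)/r`.
-/

open Set Real

lemma mul_rpow_sub_mul_le {c q x y : ℝ} (hq0 : 0 < q) (hq1 : q ≤ 1) (hc : 0 ≤ c) (hx : 0 ≤ x)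
    (hy : 0 < y) : c * x ^ (1 - q) - x * y ≤ c * (c / y) ^ ((1 - q) / q) := by
  rcases le_or_gt (c / y) (x ^ q) with hlarge | hsmall
  · have : c * x ^ (1 - q) ≤ x * y :=
      calc c * x ^ (1 - q) = c / y * x ^ (1 - q) * y := by field_simp
        _ ≤ x ^ q * x ^ (1 - q) * y := by gcongr
        _ = x * y := by rw [← rpow_add' hx (by simp), add_sub_cancel, rpow_one]
    have : 0 ≤ c * (c / y) ^ ((1 - q) / q) := by positivity
    linarith
  · have hxle : x ≤ (c / y) ^ q⁻¹ :=
      (le_rpow_inv_iff_of_pos hx (by positivity) hq0).2 hsmall.le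
    have : x ^ (1 - q) ≤ (c / y) ^ ((1 - q) / q) :=
      calc x ^ (1 - q) ≤ ((c / y) ^ q⁻¹) ^ (1 - q) := rpow_le_rpow hx hxle (by linarith)
        _ = (c / y) ^ ((1 - q) / q) := by rw [← rpow_mul (by positivity), inv_mul_eq_div]
    nlinarith [mul_nonneg hx hy.le]

lemma conj_le {U : ℝ → ℝ} {y B : ℝ} (h : ∀ x > 0, U x - x * y ≤ B) : conj U y ≤ B :=
  csSup_le (nonempty_Ioi.image _) (forall_mem_image.2 h)

lemma deriv_pos_of_le_RRA {U : ℝ → ℝ} {r x : ℝ} (hr : 0 < r) (hmono : MonotoneOn U (Ioi 0))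
    (hx : 0 < x) (hRRA : r ≤ RRA U x) : 0 < deriv U x := by
  have hnonneg : 0 ≤ deriv U x :=
    derivWithin_of_isOpen (f := U) isOpen_Ioi (mem_Ioi.2 hx) ▸ hmono.derivWithin_nonneg
  refine hnonneg.lt_of_ne fun h => ?_
  -- with `U' x = 0` the quotient defining `RRA U x` is the junk value `0`
  rw [RRA, ← h, div_zero] at hRRA
  linarith

lemma antitoneOn_deriv_mul_rpow_of_le_RRA {U : ℝ → ℝ} {r : ℝ} (hU : ContDiffOn ℝ 2 U (Ioi 0))
    (hRRA : ∀ x > 0, r ≤ RRA U x) (hpos : ∀ x > 0, 0 < deriv U x) :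
    AntitoneOn (fun x => deriv U x * x ^ r) (Ioi 0) := by
  have hU' : ∀ x > 0, HasDerivAt (deriv U) (deriv (deriv U) x) x := fun x hx =>
    (((hU.deriv_of_isOpen isOpen_Ioi (by norm_num)).differentiableOn one_ne_zero).differentiableAt
      (Ioi_mem_nhds hx)).hasDerivAt
  have hderiv : ∀ x > 0, HasDerivAt (fun x => deriv U x * x ^ r)
      (deriv (deriv U) x * x ^ r + deriv U x * (r * x ^ (r - 1))) x := fun x hx =>
    (hU' x hx).mul (hasDerivAt_rpow_const (Or.inl hx.ne'))
  refine antitoneOn_of_hasDerivWithinAt_nonpos (convex_Ioi 0) (f' := fun x =>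
      deriv (deriv U) x * x ^ r + deriv U x * (r * x ^ (r - 1)))
    (fun x hx => (hderiv x hx).continuousAt.continuousWithinAt) ?_ ?_ <;> rw [interior_Ioi]
  · exact fun x hx => (hderiv x hx).hasDerivWithinAt
  · intro x (hx : 0 < x)
    have hRRA' : x * deriv (deriv U) x + r * deriv U x ≤ 0 := by
      have := hRRA x hx
      rw [RRA, le_div_iff₀ (hpos x hx)] at this
      linarith
    calc deriv (deriv U) x * x ^ r + deriv U x * (r * x ^ (r - 1))
        = x ^ (r - 1) * (x * deriv (deriv U) x + r * deriv U x) := by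
          rw [rpow_sub_one hx.ne']; field_simp
      _ ≤ 0 := mul_nonpos_of_nonneg_of_nonpos (by positivity) hRRA'

lemma deriv_le_mul_rpow_neg_of_le_RRA {U : ℝ → ℝ} {r t : ℝ} (hU : ContDiffOn ℝ 2 U (Ioi 0))
    (hRRA : ∀ x > 0, r ≤ RRA U x) (hpos : ∀ x > 0, 0 < deriv U x) (ht : 1 ≤ t) :
    deriv U t ≤ deriv U 1 * t ^ (-r) := by
  have ht0 : 0 < t := by linarith
  have := antitoneOn_deriv_mul_rpow_of_le_RRA hU hRRA hpos (mem_Ioi.2 one_pos) ht0 ht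
  simp only [one_rpow, mul_one] at this
  rw [rpow_neg ht0.le, ← div_eq_mul_inv, le_div_iff₀ (by positivity)]
  exact this

lemma le_add_mul_rpow_of_le_RRA {U : ℝ → ℝ} {r x : ℝ} (hr0 : 0 < r) (hr1 : r < 1)
    (hmono : MonotoneOn U (Ioi 0)) (hU : ContDiffOn ℝ 2 U (Ioi 0))
    (hRRA : ∀ x > 0, r ≤ RRA U x) (hx : 0 < x) :
    U x ≤ U 1 + deriv U 1 / (1 - r) * x ^ (1 - r) := by
  have hpos : ∀ x > 0, 0 < deriv U x := fun x hx => deriv_pos_of_le_RRA hr0 hmono hx (hRRA x hx)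
  have hc : 0 < deriv U 1 / (1 - r) := div_pos (hpos 1 one_pos) (by linarith)
  rcases lt_or_ge x 1 with hx1 | hx1
  · have := hmono hx (mem_Ioi.2 one_pos) hx1.le
    have : 0 ≤ deriv U 1 / (1 - r) * x ^ (1 - r) := by positivity
    linarith
  have hdecay : ∀ t ≥ 1, deriv U t ≤ deriv U 1 / (1 - r) * ((1 - r) * t ^ (1 - r - 1)) := by
    intro t ht
    have hr1' : 1 - r ≠ 0 := by linarith
    calc deriv U t ≤ deriv U 1 * t ^ (-r) := deriv_le_mul_rpow_neg_of_le_RRA hU hRRA hpos ht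
      _ = deriv U 1 / (1 - r) * ((1 - r) * t ^ (1 - r - 1)) := by
        rw [sub_sub_cancel_left]; field_simp
  have hU' : ∀ t ≥ 1, HasDerivAt U (deriv U t) t := fun t ht =>
    ((hU.differentiableOn (by norm_num)).differentiableAt (Ioi_mem_nhds (by linarith))).hasDerivAt
  have hB : ∀ t ≥ 1, HasDerivAt (fun t => U 1 + deriv U 1 / (1 - r) * (t ^ (1 - r) - 1))
      (deriv U 1 / (1 - r) * ((1 - r) * t ^ (1 - r - 1))) t := fun t ht =>
    (((hasDerivAt_rpow_const (Or.inl (by linarith))).sub_const 1).const_mul _).const_add _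
  have hcmp := image_le_of_deriv_right_le_deriv_boundary (a := 1) (b := x)
    (fun t ht => (hU' t ht.1).continuousAt.continuousWithinAt)
    (fun t ht => (hU' t ht.1).hasDerivWithinAt) (by simp)
    (fun t ht => (hB t ht.1).continuousAt.continuousWithinAt)
    (fun t ht => (hB t ht.1).hasDerivWithinAt) (fun t ht => hdecay t ht.1) ⟨hx1, le_rfl⟩
  linarith

theorem stmt1_general (U : ℝ → ℝ) (r : ℝ) (hr : 0 < r)
    (hmono : StrictMonoOn U (Set.Ioi 0))
    (hsmooth : ContDiffOn ℝ 2 U (Set.Ioi 0))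
    (hRRA : ∀ x > 0, r ≤ RRA U x) :
    ∃ δ > (0:ℝ), ∃ K₁ > (0:ℝ), ∃ K₂ > (0:ℝ), ∀ y > (0:ℝ),
      conj U y < K₁ * y ^ (-δ) + K₂ := by
  set s := min r (1 / 2)
  have hs0 : 0 < s := lt_min hr (by norm_num)
  have hs1 : s < 1 := (min_le_right _ _).trans_lt (by norm_num)
  have hRRA' : ∀ x > 0, s ≤ RRA U x := fun x hx => (min_le_left _ _).trans (hRRA x hx)
  set c := deriv U 1 / (1 - s)
  have hc : 0 < c := div_pos (deriv_pos_of_le_RRA hs0 hmono.monotoneOn one_pos (hRRA' 1 one_pos))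
    (by linarith)
  set δ := (1 - s) / s
  refine ⟨δ, div_pos (by linarith) hs0, c * c ^ δ, by positivity, |U 1| + 1, by positivity,
    fun y hy => ?_⟩
  have hbound : ∀ x > 0, U x - x * y ≤ U 1 + c * (c / y) ^ δ := fun x hx => by
    have := le_add_mul_rpow_of_le_RRA hs0 hs1 hmono.monotoneOn hsmooth hRRA' hx
    have := mul_rpow_sub_mul_le hs0 hs1.le hc.le hx.le hy
    linarith
  calc conj U y ≤ U 1 + c * (c / y) ^ δ := conj_le hbound
    _ = U 1 + c * c ^ δ * y ^ (-δ) := by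
      rw [div_rpow hc.le hy.le, rpow_neg hy.le, div_eq_mul_inv, mul_assoc]
    _ < c * c ^ δ * y ^ (-δ) + (|U 1| + 1) := by linarith [le_abs_self (U 1)]

theorem stmt1 (U : ℝ → ℝ) (r : ℝ) (hr : 0 < r)
    (hmono : StrictMonoOn U (Set.Ioi 0))
    (hconc : StrictConcaveOn ℝ (Set.Ioi 0) U)
    (hsmooth : ContDiffOn ℝ 2 U (Set.Ioi 0))
    (hinada0 : Filter.Tendsto (deriv U) (nhdsWithin 0 (Set.Ioi 0)) Filter.atTop)
    (hinadaInf : Filter.Tendsto (deriv U) Filter.atTop (nhds 0))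
    (hRRA : ∀ x > 0, r ≤ RRA U x) :
    ∃ δ > (0:ℝ), ∃ K₁ > (0:ℝ), ∃ K₂ > (0:ℝ), ∀ y > (0:ℝ),
      conj U y < K₁ * y ^ (-δ) + K₂ :=
  stmt1_general U r hr hmono hsmooth hRRA
end

section
/- Suppose that for every i ∈ {1,…,N}, U_i : (0,∞) → ℝ is an increasing, strictly concave, twice continuously differentiable utility function satisfying the Inada conditions U_i'(0+) = ∞ and U_i'(∞) = 0, and that there exists ε_i > 0 such that RRA[U_i](x) ≥ ε_i + μ_i/(1+μ_i) for all x > 0. Then the map G : ℝ^N → ℝ^N is continuously differentiable and a bijection of ℝ^N. -/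
/-- `V(y) = ln U'(e^y)`. -/
noncomputable def Vfun (U : ℝ → ℝ) (y : ℝ) : ℝ := Real.log (deriv U (Real.exp y))

/-- The map `G : ℝ^N → ℝ^N`,
`G^i(y) = V_i(y^i − μ_i·Σ_{j≠i} y^j) − μ_i·Σ_{j≠i} y^j`. -/
noncomputable def Gmap {N : ℕ} (U : Fin N → ℝ → ℝ) (μ : Fin N → ℝ)
    (y : Fin N → ℝ) : Fin N → ℝ :=
  fun i => Vfun (U i) (y i - μ i * ∑ j ∈ Finset.univ.erase i, y j)
    - μ i * ∑ j ∈ Finset.univ.erase i, y j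

open Real Filter Set Finset Function

section RiskAversion

variable {U : ℝ → ℝ}

lemma deriv_ne_zero_of_pos_le_RRA {c x : ℝ} (hc : 0 < c) (h : c ≤ RRA U x) : deriv U x ≠ 0 := by
  intro h0
  rw [RRA, h0, div_zero] at h
  exact h.not_gt hc

lemma hasDerivAt_Vfun {y : ℝ} (hd : DifferentiableAt ℝ (deriv U) (exp y))
    (hne : deriv U (exp y) ≠ 0) : HasDerivAt (Vfun U) (-RRA U (exp y)) y := by
  refine ((hd.hasDerivAt.comp y (hasDerivAt_exp y)).log hne).congr_deriv ?_
  rw [RRA, comp_apply]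
  ring

lemma contDiff_Vfun {n : WithTop ℕ∞} (hU : ContDiffOn ℝ n (deriv U) (Ioi 0))
    (hne : ∀ x > 0, deriv U x ≠ 0) : ContDiff ℝ n (Vfun U) :=
  contDiff_iff_contDiffAt.2 fun y =>
    (contDiffAt_log.2 (hne _ (exp_pos y))).comp y
      ((hU.contDiffAt (isOpen_Ioi.mem_nhds (exp_pos y))).comp y contDiff_exp.contDiffAt)

end RiskAversion

lemma surjective_of_forall_le_deriv {f : ℝ → ℝ} {ε : ℝ} (hf : Differentiable ℝ f) (hε : 0 < ε)
    (hf' : ∀ x, ε ≤ deriv f x) : Surjective f := by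
  have hslope {x y : ℝ} (hxy : x ≤ y) : ε * (y - x) ≤ f y - f x :=
    mul_sub_le_image_sub_of_le_deriv hf hf' hxy
  refine hf.continuous.surjective ?_ ?_
  · refine tendsto_atTop_mono' _ ?_ <|
      tendsto_atTop_add_const_left _ (f 0) (tendsto_id.const_mul_atTop hε)
    filter_upwards [eventually_ge_atTop 0] with x hx
    dsimp only [id]
    linarith [hslope hx]
  · refine tendsto_atBot_mono' _ ?_ <|
      tendsto_atBot_add_const_left _ (f 0) (tendsto_id.const_mul_atBot hε)
    filter_upwards [eventually_le_atBot 0] with x hx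
    dsimp only [id]
    linarith [hslope hx]

lemma exists_orderIso_eq_neg_Vfun_sub {U : ℝ → ℝ} {ε ν : ℝ} (hε : 0 < ε)
    (hU : DifferentiableOn ℝ (deriv U) (Ioi 0)) (hne : ∀ x > 0, deriv U x ≠ 0)
    (hR : ∀ x > 0, ε + ν ≤ RRA U x) : ∃ e : ℝ ≃o ℝ, ∀ b, e b = -Vfun U b - ν * b := by
  set f : ℝ → ℝ := fun b => -Vfun U b - ν * b
  have hf (b : ℝ) : HasDerivAt f (RRA U (exp b) - ν) b := by
    have hV := hasDerivAt_Vfun (hU.differentiableAt (isOpen_Ioi.mem_nhds (exp_pos b)))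
      (hne _ (exp_pos b))
    exact (hV.neg.sub ((hasDerivAt_id b).const_mul ν)).congr_deriv (by ring)
  have hf' (b : ℝ) : ε ≤ deriv f b := by
    rw [(hf b).deriv]
    linarith [hR _ (exp_pos b)]
  have hdiff : Differentiable ℝ f := fun b => (hf b).differentiableAt
  exact ⟨StrictMono.orderIsoOfSurjective f (strictMono_of_deriv_pos fun b => hε.trans_le (hf' b))
    (surjective_of_forall_le_deriv hdiff hε hf'), fun _ => rfl⟩

lemma StrictAnti.bijective_add_antitone {f g : ℝ → ℝ} (hf : StrictAnti f) (hf_surj : Surjective f)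
    (hfc : Continuous f) (hg : Antitone g) (hgc : Continuous g) : Bijective (f + g) := by
  have hf_top : Tendsto f atTop atBot :=
    tendsto_atTop_atBot_of_antitone hf.antitone fun b => ⟨_, (hf_surj b).choose_spec.le⟩
  have hf_bot : Tendsto f atBot atTop :=
    tendsto_atBot_atTop_of_antitone hf.antitone fun b => ⟨_, (hf_surj b).choose_spec.ge⟩
  refine ⟨(hf.add_antitone hg).injective, (hfc.add hgc).surjective' ?_ ?_⟩
  · exact tendsto_atTop_add_right_of_le' _ (g 0) hf_bot
      (by filter_upwards [eventually_le_atBot 0] with x hx using hg hx)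
  · exact tendsto_atBot_add_right_of_ge' _ (g 0) hf_top
      (by filter_upwards [eventually_ge_atTop 0] with x hx using hg hx)

namespace OrderIso

variable (e : ℝ ≃o ℝ) {w ν a : ℝ}

lemma antitone_symm_sub_mul_div (hν : 0 ≤ ν) (ha : 0 ≤ a) :
    Antitone fun S => e.symm (w - ν * S) / a := fun _ _ hab =>
  div_le_div_of_nonneg_right (e.symm.monotone (by nlinarith)) ha

lemma strictAnti_symm_sub_mul_div (hν : 0 < ν) (ha : 0 < a) :
    StrictAnti fun S => e.symm (w - ν * S) / a := fun _ _ hab =>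
  div_lt_div_of_pos_right (e.symm.strictMono (by nlinarith)) ha

lemma surjective_symm_sub_mul_div (hν : ν ≠ 0) (ha : a ≠ 0) :
    Surjective fun S => e.symm (w - ν * S) / a := fun t =>
  ⟨(w - e (a * t)) / ν, by simp [mul_div_cancel₀ _ hν, ha]⟩

lemma continuous_symm_sub_mul_div : Continuous fun S => e.symm (w - ν * S) / a :=
  (e.symm.continuous.comp (by fun_prop)).div_const _

end OrderIso

section CoupledSystem

variable {ι : Type*} [Fintype ι] (e : ι → ℝ ≃o ℝ) (μ : ι → ℝ)

noncomputable def coupledMap (y : ι → ℝ) : ι → ℝ :=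
  fun i => e i ((1 + μ i) * y i - μ i * ∑ j, y j) + μ i / (1 + μ i) * ∑ j, y j

noncomputable def coupledSol (w : ι → ℝ) (S : ℝ) : ι → ℝ :=
  fun i => ((e i).symm (w i - μ i / (1 + μ i) * S) + μ i * S) / (1 + μ i)

variable {e μ}

lemma coupledMap_eq_iff (hμ : ∀ i, 1 + μ i ≠ 0) {y w : ι → ℝ} :
    coupledMap e μ y = w ↔ y = coupledSol e μ w (∑ j, y j) := by
  simp only [funext_iff, coupledMap, coupledSol]
  refine forall_congr' fun i => ?_
  rw [eq_div_iff (hμ i), ← sub_eq_iff_eq_add, (e i).eq_symm_apply, eq_sub_iff_add_eq,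
    mul_comm (y i)]

lemma sum_coupledSol_sub (w : ι → ℝ) (S : ℝ) :
    ∑ i, coupledSol e μ w S i - S = ∑ i, (e i).symm (w i - μ i / (1 + μ i) * S) / (1 + μ i)
      - (1 - ∑ i, μ i / (1 + μ i)) * S := by
  simp only [coupledSol, add_div, mul_div_right_comm, sum_add_distrib, ← sum_mul]
  ring

lemma bijective_sum_coupledSol_sub (hμ : ∀ i, 0 ≤ μ i) (hν : ∑ i, μ i / (1 + μ i) ≤ 1)
    (w : ι → ℝ) : Bijective fun S => ∑ i, coupledSol e μ w S i - S := by
  set ν : ι → ℝ := fun i => μ i / (1 + μ i)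
  set A : ι → ℝ → ℝ := fun i S => (e i).symm (w i - ν i * S) / (1 + μ i)
  have h1μ (i : ι) : 0 < 1 + μ i := by linarith [hμ i]
  have hsum_anti (s : Finset ι) : Antitone fun S => ∑ i ∈ s, A i S := fun a b hab =>
    sum_le_sum fun i _ =>
      (e i).antitone_symm_sub_mul_div (div_nonneg (hμ i) (h1μ i).le) (h1μ i).le hab
  have hsum_cont (s : Finset ι) : Continuous fun S => ∑ i ∈ s, A i S :=
    continuous_finsetSum _ fun i _ => (e i).continuous_symm_sub_mul_div
  simp only [sum_coupledSol_sub]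
  -- The strictly decreasing summand is the linear term if `∑ ν < 1`, and some `A k` with
  -- `ν k > 0` otherwise.
  rcases hν.lt_or_eq with hlt | heq
  · have hκ : 0 < 1 - ∑ i, ν i := sub_pos.2 hlt
    have := StrictAnti.bijective_add_antitone (f := fun S => -(1 - ∑ i, ν i) * S)
      (fun a b hab => by nlinarith) (fun t => ⟨-t / (1 - ∑ i, ν i), by field_simp⟩)
      (by fun_prop) (hsum_anti univ) (hsum_cont univ)
    convert this using 2 with S
    simp only [Pi.add_apply]
    ring
  · classical
    obtain ⟨k, hk⟩ : ∃ k, 0 < ν k := by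
      by_contra! h
      linarith [sum_nonpos (s := univ) fun i _ => h i]
    have hsplit : (fun S => ∑ i, A i S - (1 - ∑ i, ν i) * S) =
        A k + fun S => ∑ i ∈ univ.erase k, A i S := by
      funext S
      rw [heq, Pi.add_apply, add_sum_erase _ (fun i => A i S) (mem_univ k)]
      ring
    exact hsplit ▸ StrictAnti.bijective_add_antitone
      ((e k).strictAnti_symm_sub_mul_div hk (h1μ k))
      ((e k).surjective_symm_sub_mul_div hk.ne' (h1μ k).ne') (e k).continuous_symm_sub_mul_div
      (hsum_anti _) (hsum_cont _)

theorem bijective_coupledMap (hμ : ∀ i, 0 ≤ μ i) (hν : ∑ i, μ i / (1 + μ i) ≤ 1) :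
    Bijective (coupledMap e μ) := by
  have hμ' (i : ι) : 1 + μ i ≠ 0 := by linarith [hμ i]
  refine (bijective_iff_existsUnique _).2 fun w => ?_
  obtain ⟨S, hS, hS_uniq⟩ : ∃! S, ∑ i, coupledSol e μ w S i = S := by
    simpa [sub_eq_zero] using (bijective_sum_coupledSol_sub hμ hν w).existsUnique 0
  refine ⟨coupledSol e μ w S, (coupledMap_eq_iff hμ').2 (by rw [hS]), fun y hy => ?_⟩
  have hy' := (coupledMap_eq_iff hμ').1 hy
  rwa [hS_uniq _ (congrArg (fun z => ∑ j, z j) hy').symm] at hy'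

end CoupledSystem

lemma Gmap_eq_neg_coupledMap {N : ℕ} {U : Fin N → ℝ → ℝ} {μ : Fin N → ℝ} {e : Fin N → ℝ ≃o ℝ}
    (he : ∀ i b, e i b = -Vfun (U i) b - μ i / (1 + μ i) * b) (hμ : ∀ i, 1 + μ i ≠ 0) :
    Gmap U μ = -coupledMap e μ := by
  funext y i
  have hs : ∑ j ∈ univ.erase i, y j = ∑ j, y j - y i := sum_erase_eq_sub (mem_univ i)
  have hb : y i - μ i * (∑ j, y j - y i) = (1 + μ i) * y i - μ i * ∑ j, y j := by ring
  simp only [Gmap, coupledMap, Pi.neg_apply, he, hs, hb]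
  field_simp [hμ i]
  ring

lemma contDiff_Gmap {N : ℕ} {U : Fin N → ℝ → ℝ} (μ : Fin N → ℝ) {n : WithTop ℕ∞}
    (hV : ∀ i, ContDiff ℝ n (Vfun (U i))) : ContDiff ℝ n (Gmap U μ) := by
  refine contDiff_pi.2 fun i => ?_
  have := hV i
  unfold Gmap
  fun_prop

lemma sum_div_one_add_le_one {ι : Type*} [Fintype ι] [Nonempty ι] {μ : ι → ℝ}
    (hμ : ∀ i, 0 ≤ μ i) (h : ∀ i, μ i * (Fintype.card ι - 1) ≤ 1) :
    ∑ i, μ i / (1 + μ i) ≤ 1 := by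
  have hn : (0 : ℝ) < Fintype.card ι := by exact_mod_cast Fintype.card_pos
  calc ∑ i, μ i / (1 + μ i) ≤ ∑ _i : ι, (Fintype.card ι : ℝ)⁻¹ := by
        refine sum_le_sum fun i _ => ?_
        rw [div_le_iff₀ (by linarith [hμ i]), ← div_eq_inv_mul, le_div_iff₀ hn]
        linarith [h i]
    _ = 1 := by simp [hn.ne']

theorem stmt2_general (N : ℕ) (hN : 2 ≤ N) (U : Fin N → ℝ → ℝ) (lam μ eps : Fin N → ℝ)
    (hlam : ∀ i, lam i ∈ Set.Icc (0:ℝ) 1)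
    (hμ : ∀ i, μ i = lam i / ((N : ℝ) - 1))
    (hsmooth : ∀ i, ContDiffOn ℝ 2 (U i) (Set.Ioi 0))
    (heps : ∀ i, 0 < eps i)
    (hRRA : ∀ i, ∀ x > 0, eps i + μ i / (1 + μ i) ≤ RRA (U i) x) :
    ContDiff ℝ 1 (Gmap U μ) ∧ Function.Bijective (Gmap U μ) := by
  have : Nonempty (Fin N) := ⟨⟨0, by omega⟩⟩
  have hN1 : (0 : ℝ) < N - 1 := by
    have : (2 : ℝ) ≤ N := by exact_mod_cast hN
    linarith
  have hμ0 (i : Fin N) : 0 ≤ μ i := hμ i ▸ div_nonneg (hlam i).1 hN1.le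
  have hμN (i : Fin N) : μ i * (Fintype.card (Fin N) - 1) ≤ 1 := by
    rw [Fintype.card_fin, hμ i, div_mul_cancel₀ _ hN1.ne']
    exact (hlam i).2
  have hU' (i : Fin N) : ContDiffOn ℝ 1 (deriv (U i)) (Ioi 0) :=
    (hsmooth i).deriv_of_isOpen isOpen_Ioi (by norm_num)
  have hne (i : Fin N) : ∀ x > 0, deriv (U i) x ≠ 0 := fun x hx =>
    deriv_ne_zero_of_pos_le_RRA (by have := hμ0 i; have := heps i; positivity) (hRRA i x hx)
  choose e he using fun i => exists_orderIso_eq_neg_Vfun_sub (heps i)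
    ((hU' i).differentiableOn one_ne_zero) (hne i) (hRRA i)
  refine ⟨contDiff_Gmap μ fun i => contDiff_Vfun (hU' i) (hne i), ?_⟩
  rw [Gmap_eq_neg_coupledMap he fun i => by linarith [hμ0 i]]
  exact neg_involutive.bijective.comp
    (bijective_coupledMap hμ0 (sum_div_one_add_le_one hμ0 hμN))

theorem stmt2 (N : ℕ) (hN : 2 ≤ N) (U : Fin N → ℝ → ℝ) (lam μ eps : Fin N → ℝ)
    (hlam : ∀ i, lam i ∈ Set.Icc (0:ℝ) 1)
    (hμ : ∀ i, μ i = lam i / ((N : ℝ) - 1))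
    (hmono : ∀ i, StrictMonoOn (U i) (Set.Ioi 0))
    (hconc : ∀ i, StrictConcaveOn ℝ (Set.Ioi 0) (U i))
    (hsmooth : ∀ i, ContDiffOn ℝ 2 (U i) (Set.Ioi 0))
    (hinada0 : ∀ i, Filter.Tendsto (deriv (U i)) (nhdsWithin 0 (Set.Ioi 0)) Filter.atTop)
    (hinadaInf : ∀ i, Filter.Tendsto (deriv (U i)) Filter.atTop (nhds 0))
    (heps : ∀ i, 0 < eps i)
    (hRRA : ∀ i, ∀ x > 0, eps i + μ i / (1 + μ i) ≤ RRA (U i) x) :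
    ContDiff ℝ 1 (Gmap U μ) ∧ Function.Bijective (Gmap U μ) :=
  stmt2_general N hN U lam μ eps hlam hμ hsmooth heps hRRA
end

section
/- Let N ≥ 2, μ_i ∈ [0, 1/(N−1)] and ε_i > 0 for i ∈ {1,…,N}, and assume μ_k < 1/(N−1) for at least one k. Then there is a constant C > 0, depending only on N, (μ_i) and (ε_i), such that for any real numbers v_1,…,v_N satisfying −v_i ≥ ε_i + μ_i/(1+μ_i) for all i, the N×N matrix M with diagonal entries M_{ii} = v_i and off-diagonal entries M_{ij} = −v_i·μ_i − μ_i (for j ≠ i) is invertible and ‖M^{-1}‖_∞ ≤ C. -/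
/-!
Write `M = D - c 𝟙ᵀ` with `D = diag d`, `dᵢ = (1 + μᵢ) vᵢ + μᵢ` and `cᵢ = μᵢ (vᵢ + 1)`.
By Sherman–Morrison, `M⁻¹ = D⁻¹ + (1 - s)⁻¹ (D⁻¹ c) (D⁻¹ 𝟙)ᵀ` with `s = Σ cᵢ / dᵢ`.
The constraint on `v` gives `|dᵢ| ≥ εᵢ`, `|cᵢ / dᵢ| ≤ 1 + 1/εᵢ` and `cᵢ / dᵢ ≤ μᵢ / (1 + μᵢ)`;
since `μ / (1 + μ)` is increasing and equals `1/N` at `μ = 1/(N-1)`, the last bound makes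
`1 - s ≥ 1 - Σ μᵢ / (1 + μᵢ) > 0` uniformly in `v`, so every row sum of `M⁻¹` is bounded.
-/

/-- The operator norm on `N×N` real matrices induced by the `∞`-norm on `ℝ^N`:
`‖M‖_∞ = max_i Σ_j |M i j|`. -/
noncomputable def infNorm {N : ℕ} (M : Matrix (Fin N) (Fin N) ℝ) : ℝ :=
  ⨆ i, ∑ j, |M i j|

open Finset Matrix

namespace Matrix

variable {n : Type*} [DecidableEq n]

theorem of_ite_eq_diagonal_sub_replicateCol (v μ : n → ℝ) :
    of (fun i j => if i = j then v i else -(v i) * μ i - μ i) =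
      diagonal (fun i => (1 + μ i) * v i + μ i) - replicateCol n (fun i => μ i * (v i + 1)) := by
  ext i j
  by_cases h : i = j <;> simp [h] <;> ring

variable [Fintype n]

theorem diagonal_sub_replicateCol_mul_eq_one {K : Type*} [Field K] (d c : n → K)
    (hd : ∀ i, d i ≠ 0) (hs : ∑ i, c i / d i ≠ 1) :
    (diagonal d - replicateCol n c) *
      (diagonal d⁻¹ + (1 - ∑ i, c i / d i)⁻¹ • vecMulVec (c / d) d⁻¹) = 1 := by
  set s := ∑ i, c i / d i
  have hs' : (1 - s)⁻¹ * (1 - s) = 1 := inv_mul_cancel₀ (sub_ne_zero.mpr (Ne.symm hs))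
  have h1 : diagonal d * diagonal d⁻¹ = 1 := by
    rw [diagonal_mul_diagonal, ← diagonal_one]
    exact congrArg diagonal (funext fun i => mul_inv_cancel₀ (hd i))
  have h2 : diagonal d * vecMulVec (c / d) d⁻¹ = vecMulVec c d⁻¹ := by
    ext i j
    simp only [diagonal_mul, vecMulVec_apply, Pi.div_apply]
    rw [← mul_assoc, mul_div_cancel₀ _ (hd i)]
  have h3 : replicateCol n c * diagonal d⁻¹ = vecMulVec c d⁻¹ := by
    ext i j
    simp [vecMulVec_apply]
  have h4 : replicateCol n c * vecMulVec (c / d) d⁻¹ = s • vecMulVec c d⁻¹ := by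
    ext i j
    simp only [mul_apply, replicateCol_apply, vecMulVec_apply, smul_apply, smul_eq_mul, s,
      sum_mul, Pi.div_apply]
    exact sum_congr rfl fun l _ => by ring
  rw [sub_mul, Matrix.mul_add, Matrix.mul_add, Matrix.mul_smul, Matrix.mul_smul, h1, h2, h3, h4,
    smul_smul]
  linear_combination (norm := module) hs' • vecMulVec c d⁻¹

theorem sum_abs_diagonal_add_smul_vecMulVec_le (g f : n → ℝ) (t : ℝ) (i : n) :
    ∑ j, |(diagonal g + t • vecMulVec f g) i j| ≤ |g i| + |t| * |f i| * ∑ j, |g j| :=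
  calc ∑ j, |(diagonal g + t • vecMulVec f g) i j|
      ≤ ∑ j, (|diagonal g i j| + |t| * |f i| * |g j|) := by
        gcongr with j
        simpa only [Matrix.add_apply, Matrix.smul_apply, vecMulVec_apply, smul_eq_mul, abs_mul,
          mul_assoc] using abs_add_le (diagonal g i j) (t * (f i * g j))
    _ = |g i| + |t| * |f i| * ∑ j, |g j| := by
        rw [sum_add_distrib, ← mul_sum]
        simp [diagonal_apply, apply_ite]

end Matrix

theorem infNorm_diagonal_add_smul_vecMulVec_le {N : ℕ} {g f e : Fin N → ℝ} {t τ b : ℝ}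
    (hg : ∀ i, |g i| ≤ e i) (hf : ∀ i, |f i| ≤ b) (hb : 0 ≤ b) (ht : |t| ≤ τ) :
    infNorm (diagonal g + t • vecMulVec f g) ≤ ∑ i, e i + τ * b * ∑ i, e i := by
  have he : ∀ i, 0 ≤ e i := fun i => (abs_nonneg _).trans (hg i)
  have hτ : 0 ≤ τ := (abs_nonneg _).trans ht
  have hse : 0 ≤ ∑ i, e i := sum_nonneg fun i _ => he i
  refine Real.iSup_le (fun i => ?_) (by positivity)
  calc _ ≤ |g i| + |t| * |f i| * ∑ j, |g j| := sum_abs_diagonal_add_smul_vecMulVec_le g f t i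
    _ ≤ ∑ i, e i + τ * b * ∑ i, e i := by
      gcongr
      · exact (hg i).trans (single_le_sum (fun j _ => he j) (mem_univ i))
      · exact hf i
      · exact hg _

section

variable {μ ε v : ℝ}

theorem mul_le_neg_one_add_mul_add (hμ : 0 ≤ μ) (hv : ε + μ / (1 + μ) ≤ -v) :
    (1 + μ) * ε ≤ -((1 + μ) * v + μ) := by
  have h := mul_le_mul_of_nonneg_left hv (by positivity : (0 : ℝ) ≤ 1 + μ)
  rw [mul_add, mul_div_cancel₀ _ (by positivity)] at h
  linarith

theorem le_abs_one_add_mul_add (hμ : 0 ≤ μ) (hε : 0 ≤ ε) (hv : ε + μ / (1 + μ) ≤ -v) :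
    ε ≤ |(1 + μ) * v + μ| := by
  have := mul_le_neg_one_add_mul_add hμ hv
  exact le_trans (by nlinarith) (neg_le_abs _)

theorem div_one_add_mul_add_le (hμ : 0 ≤ μ) (hε : 0 < ε) (hv : ε + μ / (1 + μ) ≤ -v) :
    μ * (v + 1) / ((1 + μ) * v + μ) ≤ μ / (1 + μ) := by
  have hd := mul_le_neg_one_add_mul_add hμ hv
  rw [div_le_iff_of_neg (by nlinarith), div_mul_eq_mul_div, div_le_iff₀ (by positivity)]
  nlinarith

theorem abs_div_one_add_mul_add_le (hμ : 0 ≤ μ) (hμ1 : μ ≤ 1) (hε : 0 < ε)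
    (hv : ε + μ / (1 + μ) ≤ -v) :
    |μ * (v + 1) / ((1 + μ) * v + μ)| ≤ 1 + ε⁻¹ := by
  have hd := mul_le_neg_one_add_mul_add hμ hv
  have hv0 : 0 ≤ -v := le_trans (by positivity) hv
  rw [abs_div, abs_of_neg (by nlinarith : (1 + μ) * v + μ < 0), div_le_iff₀ (by nlinarith),
    abs_mul, abs_of_nonneg hμ]
  have h1 : |v + 1| ≤ -v + 1 := abs_le.mpr ⟨by linarith, by linarith⟩
  have h2 : 1 + μ ≤ ε⁻¹ * -((1 + μ) * v + μ) := by
    rw [← div_eq_inv_mul, le_div_iff₀ hε]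
    linarith
  nlinarith [mul_le_mul_of_nonneg_left h1 hμ]

end

theorem div_one_add_le_inv {μ N : ℝ} (hN : 1 < N) (hμ : 0 ≤ μ) (h : μ ≤ 1 / (N - 1)) :
    μ / (1 + μ) ≤ N⁻¹ := by
  rw [le_div_iff₀ (by linarith)] at h
  rw [div_le_iff₀ (by positivity)]
  field_simp
  nlinarith

theorem div_one_add_lt_inv {μ N : ℝ} (hN : 1 < N) (hμ : 0 ≤ μ) (h : μ < 1 / (N - 1)) :
    μ / (1 + μ) < N⁻¹ := by
  rw [lt_div_iff₀ (by linarith)] at h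
  rw [div_lt_iff₀ (by positivity)]
  field_simp
  nlinarith

theorem sum_lt_one_of_le_inv_card {ι : Type*} [Fintype ι] {x : ι → ℝ}
    (hle : ∀ i, x i ≤ (Fintype.card ι : ℝ)⁻¹) (hlt : ∃ k, x k < (Fintype.card ι : ℝ)⁻¹) :
    ∑ i, x i < 1 := by
  obtain ⟨k, hk⟩ := hlt
  have : Nonempty ι := ⟨k⟩
  calc ∑ i, x i < ∑ _i : ι, (Fintype.card ι : ℝ)⁻¹ :=
        sum_lt_sum (fun i _ => hle i) ⟨k, mem_univ k, hk⟩
    _ = 1 := by simp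

theorem sum_div_one_add_lt_one {N : ℕ} (hN : 2 ≤ N) {μ : Fin N → ℝ}
    (hμ : ∀ i, μ i ∈ Set.Icc (0 : ℝ) (1 / ((N : ℝ) - 1)))
    (hk : ∃ k, μ k < 1 / ((N : ℝ) - 1)) :
    ∑ i, μ i / (1 + μ i) < 1 := by
  have hN' : (1 : ℝ) < N := by exact_mod_cast hN
  obtain ⟨k, hk⟩ := hk
  exact sum_lt_one_of_le_inv_card
    (fun i => by simpa using div_one_add_le_inv hN' (hμ i).1 (hμ i).2)
    ⟨k, by simpa using div_one_add_lt_inv hN' (hμ k).1 hk⟩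

theorem stmt4 (N : ℕ) (hN : 2 ≤ N) (μ ε : Fin N → ℝ)
    (hμ : ∀ i, μ i ∈ Set.Icc (0:ℝ) (1 / ((N : ℝ) - 1)))
    (hε : ∀ i, 0 < ε i)
    (hk : ∃ k, μ k < 1 / ((N : ℝ) - 1)) :
    ∃ C > (0:ℝ), ∀ v : Fin N → ℝ, (∀ i, ε i + μ i / (1 + μ i) ≤ -v i) →
      IsUnit (Matrix.of fun i j => if i = j then v i else -(v i) * μ i - μ i) ∧
      infNorm (Matrix.of fun i j => if i = j then v i else -(v i) * μ i - μ i)⁻¹ ≤ C := by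
  have hN' : (2 : ℝ) ≤ N := by exact_mod_cast hN
  have hμ0 : ∀ i, 0 ≤ μ i := fun i => (hμ i).1
  have hμ1 : ∀ i, μ i ≤ 1 := fun i =>
    (hμ i).2.trans (div_le_one_of_le₀ (by linarith) (by linarith))
  set δ := 1 - ∑ i, μ i / (1 + μ i)
  have hδ : 0 < δ := sub_pos.mpr (sum_div_one_add_lt_one hN hμ hk)
  set S := ∑ j, (ε j)⁻¹
  have hεS : ∀ i, (ε i)⁻¹ ≤ S := fun i =>
    single_le_sum (fun j _ => (inv_pos.mpr (hε j)).le) (mem_univ i)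
  have hS : 0 < S := (inv_pos.mpr (hε ⟨0, by omega⟩)).trans_le (hεS _)
  refine ⟨S + δ⁻¹ * (1 + S) * S, by positivity, fun v hv => ?_⟩
  set d := fun i => (1 + μ i) * v i + μ i
  set c := fun i => μ i * (v i + 1)
  have hd : ∀ i, ε i ≤ |d i| := fun i => le_abs_one_add_mul_add (hμ0 i) (hε i).le (hv i)
  have hs : ∑ i, c i / d i ≤ 1 - δ := by
    rw [sub_sub_cancel]
    exact sum_le_sum fun i _ => div_one_add_mul_add_le (hμ0 i) (hε i) (hv i)
  have hMW := diagonal_sub_replicateCol_mul_eq_one d c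
    (fun i => abs_pos.mp ((hε i).trans_le (hd i))) (by linarith)
  rw [of_ite_eq_diagonal_sub_replicateCol, inv_eq_right_inv hMW]
  refine ⟨IsUnit.of_mul_eq_one _ hMW, infNorm_diagonal_add_smul_vecMulVec_le
    (fun i => by rw [Pi.inv_apply, abs_inv]; exact inv_anti₀ (hε i) (hd i))
    (fun i => (abs_div_one_add_mul_add_le (hμ0 i) (hμ1 i) (hε i) (hv i)).trans
      (by linarith [hεS i]))
    (by positivity) ?_⟩
  rw [abs_inv, abs_of_pos (by linarith)]
  exact inv_anti₀ hδ (by linarith)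
end

section
/- Let N ≥ 2, μ_i ∈ [0, 1/(N−1)] and ε_i > 0 for i ∈ {1,…,N}, fix an index i₀ and a constant R ≥ ε_{i₀} + μ_{i₀}/(1+μ_{i₀}). Then there is a constant C > 0, depending only on N, (μ_i), (ε_i) and R, such that for any real numbers v_1,…,v_N satisfying ε_{i₀} + μ_{i₀}/(1+μ_{i₀}) ≤ −v_{i₀} ≤ R and −v_j ≥ ε_j + μ_j/(1+μ_j) for all j ≠ i₀, the N×N matrix M with diagonal entries M_{ii} = v_i and off-diagonal entries M_{ij} = −v_i·μ_i − μ_i (for j ≠ i) is invertible and ‖M^{-1}‖_∞ ≤ C. -/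
/-!
Write the matrix as `D - u 1ᵀ` with `D = diag (vᵢ (1 + μᵢ) + μᵢ)` and `uᵢ = μᵢ (vᵢ + 1)`. The
hypotheses give `Dᵢᵢ ≤ -εᵢ`, and `uᵢ / Dᵢᵢ = μᵢ / (1 + μᵢ) · (1 + 1 / Dᵢᵢ)` is at most
`μᵢ / (1 + μᵢ) ≤ 1 / N`, with a definite gain at `i₀` since `-D_{i₀i₀} ≤ (1 + μ_{i₀}) R`.
So `1 - Σ uᵢ / Dᵢᵢ ≥ δ > 0` uniformly in `v`, and the Sherman–Morrison inverse
`D⁻¹ + (1 - Σ uᵢ / Dᵢᵢ)⁻¹ (D⁻¹ u) (1ᵀ D⁻¹)` has row sums at most `(1 + (1 + E) / δ) E`,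
where `E = Σ 1 / εᵢ`.
-/

open Matrix

/-- Sherman–Morrison for a rank-one perturbation of an invertible diagonal matrix. -/
theorem Matrix.diagonal_sub_vecMulVec_mul_eq_one {K n : Type*} [Field K] [Fintype n] [DecidableEq n]
    {d u w : n → K} (hd : ∀ i, d i ≠ 0) (hs : w ⬝ᵥ (u / d) ≠ 1) :
    (diagonal d - vecMulVec u w) *
      (diagonal d⁻¹ + (1 - w ⬝ᵥ (u / d))⁻¹ • vecMulVec (u / d) (w / d)) = 1 := by
  have hdd : diagonal d * diagonal d⁻¹ = 1 := by
    rw [diagonal_mul_diagonal, ← diagonal_one]; congr 1; ext i; simp [hd i]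
  have hdu : diagonal d *ᵥ (u / d) = u := by
    ext i; simp [mulVec_diagonal, mul_div_cancel₀ _ (hd i)]
  have hwd : w ᵥ* diagonal d⁻¹ = w / d := by ext i; simp [vecMul_diagonal, div_eq_mul_inv]
  have hcoeff : (1 - w ⬝ᵥ (u / d))⁻¹ - 1 - (1 - w ⬝ᵥ (u / d))⁻¹ * w ⬝ᵥ (u / d) = 0 := by
    field_simp [sub_ne_zero.mpr (Ne.symm hs)]; ring
  rw [sub_mul, mul_add, mul_add, Matrix.mul_smul, Matrix.mul_smul, hdd, mul_vecMulVec, hdu,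
    vecMulVec_mul, hwd, vecMulVec_mul_vecMulVec, vecMulVec_smul]
  linear_combination (norm := module) hcoeff • vecMulVec u (w / d)

theorem Matrix.sum_abs_diagonal_inv_add_smul_vecMulVec_le {n : Type*} [Fintype n] [DecidableEq n]
    {d ε a : n → ℝ} {c A C : ℝ} (hε : ∀ k, 0 < ε k) (hd : ∀ k, ε k ≤ |d k|) (i : n)
    (ha : |a i| ≤ A) (hc : |c| ≤ C) :
    ∑ k, |(diagonal d⁻¹ + c • vecMulVec a (1 / d) : Matrix n n ℝ) i k| ≤
      (1 + C * A) * ∑ k, 1 / ε k := by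
  rw [Finset.mul_sum]
  refine Finset.sum_le_sum fun k _ => ?_
  have hCA : |c * a i| ≤ C * A := by
    rw [abs_mul]; exact mul_le_mul hc ha (abs_nonneg _) ((abs_nonneg _).trans hc)
  have hdiag : |diagonal d⁻¹ i k| ≤ |d k|⁻¹ := by
    rcases eq_or_ne i k with rfl | hik
    · simp
    · simp [diagonal_apply_ne _ hik]
  calc |(diagonal d⁻¹ + c • vecMulVec a (1 / d) : Matrix n n ℝ) i k|
      ≤ |diagonal d⁻¹ i k| + |c * a i| * |d k|⁻¹ := by
        simpa [vecMulVec_apply, mul_assoc, div_eq_mul_inv] using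
          abs_add_le (diagonal d⁻¹ i k) (c * (a i * (d k)⁻¹))
    _ ≤ (1 + C * A) * |d k|⁻¹ := by nlinarith [inv_nonneg.mpr (abs_nonneg (d k))]
    _ ≤ (1 + C * A) * (1 / ε k) := by
        rw [one_div]
        exact mul_le_mul_of_nonneg_left (inv_anti₀ (hε k) (hd k))
          (by linarith [abs_nonneg (c * a i)])

theorem infNorm_le_of_sum_abs_le {N : ℕ} {M : Matrix (Fin N) (Fin N) ℝ} {C : ℝ} (hC : 0 ≤ C)
    (h : ∀ i, ∑ j, |M i j| ≤ C) : infNorm M ≤ C :=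
  Real.iSup_le h hC

def diagCoeff (μ v : ℝ) : ℝ := v * (1 + μ) + μ

def rankOneCoeff (μ v : ℝ) : ℝ := μ * (v + 1)

theorem diagCoeff_le {μ ε v : ℝ} (hμ : 0 ≤ μ) (hv : ε + μ / (1 + μ) ≤ -v) :
    diagCoeff μ v ≤ -(ε * (1 + μ)) := by
  have h : μ / (1 + μ) * (1 + μ) = μ := div_mul_cancel₀ _ (by positivity)
  unfold diagCoeff
  nlinarith

theorem le_neg_diagCoeff {μ ε v : ℝ} (hμ : 0 ≤ μ) (hε : 0 ≤ ε) (hv : ε + μ / (1 + μ) ≤ -v) :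
    ε ≤ -diagCoeff μ v := by
  nlinarith [diagCoeff_le hμ hv]

theorem diagCoeff_neg {μ ε v : ℝ} (hμ : 0 ≤ μ) (hε : 0 < ε) (hv : ε + μ / (1 + μ) ≤ -v) :
    diagCoeff μ v < 0 := by
  linarith [le_neg_diagCoeff hμ hε.le hv]

theorem rankOneCoeff_div_diagCoeff {μ v : ℝ} (hμ : 0 ≤ μ) (hd : diagCoeff μ v ≠ 0) :
    rankOneCoeff μ v / diagCoeff μ v = μ / (1 + μ) * (1 + (diagCoeff μ v)⁻¹) := by
  have : 1 + μ ≠ 0 := by positivity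
  field_simp
  unfold rankOneCoeff diagCoeff
  ring

theorem rankOneCoeff_div_diagCoeff_le {μ ε v : ℝ} (hμ : 0 ≤ μ) (hε : 0 < ε)
    (hv : ε + μ / (1 + μ) ≤ -v) :
    rankOneCoeff μ v / diagCoeff μ v ≤ μ / (1 + μ) := by
  have hd := diagCoeff_neg hμ hε hv
  rw [rankOneCoeff_div_diagCoeff hμ hd.ne]
  have : 0 ≤ μ / (1 + μ) := by positivity
  nlinarith [inv_lt_zero.mpr hd]

theorem abs_rankOneCoeff_div_diagCoeff_le {μ ε v : ℝ} (hμ : 0 ≤ μ) (hε : 0 < ε)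
    (hv : ε + μ / (1 + μ) ≤ -v) :
    |rankOneCoeff μ v / diagCoeff μ v| ≤ 1 + 1 / ε := by
  have hd := diagCoeff_neg hμ hε hv
  have hinv : |(diagCoeff μ v)⁻¹| ≤ 1 / ε := by
    rw [abs_inv, abs_of_neg hd, one_div]
    exact inv_anti₀ hε (le_neg_diagCoeff hμ hε.le hv)
  have hμ1 : |μ / (1 + μ)| ≤ 1 := by
    rw [abs_of_nonneg (by positivity), div_le_one (by positivity)]; linarith
  rw [rankOneCoeff_div_diagCoeff hμ hd.ne, abs_mul]
  calc |μ / (1 + μ)| * |1 + (diagCoeff μ v)⁻¹| ≤ 1 * (1 + 1 / ε) :=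
        mul_le_mul hμ1 ((abs_add_le _ _).trans (by rw [abs_one]; linarith)) (abs_nonneg _)
          zero_le_one
    _ = 1 + 1 / ε := one_mul _

theorem rankOneCoeff_div_diagCoeff_le_of_le {μ ε v R : ℝ} (hμ : 0 ≤ μ) (hε : 0 < ε)
    (hv : ε + μ / (1 + μ) ≤ -v) (hR : -v ≤ R) :
    rankOneCoeff μ v / diagCoeff μ v ≤ μ / (1 + μ) * (1 - ((1 + μ) * R)⁻¹) := by
  have hd := diagCoeff_neg hμ hε hv
  have hdR : -diagCoeff μ v ≤ (1 + μ) * R := by unfold diagCoeff; nlinarith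
  have hinv : (diagCoeff μ v)⁻¹ ≤ -((1 + μ) * R)⁻¹ := by
    rw [le_neg, ← inv_neg]
    exact inv_anti₀ (by linarith) hdR
  rw [rankOneCoeff_div_diagCoeff hμ hd.ne, sub_eq_add_neg]
  exact mul_le_mul_of_nonneg_left (by linarith) (by positivity)

theorem div_one_add_le_inv_s5 {μ n : ℝ} (hμ : 0 ≤ μ) (hn : 1 < n) (hμn : μ ≤ 1 / (n - 1)) :
    μ / (1 + μ) ≤ 1 / n := by
  rw [le_div_iff₀ (by linarith)] at hμn
  rw [div_le_div_iff₀ (by positivity) (by positivity)]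
  linarith

theorem exists_pos_le_inv_sub_rankOneCoeff_div_diagCoeff {μ ε R n : ℝ} (hμ : 0 ≤ μ) (hε : 0 < ε)
    (hn : 0 < n) (hμn : μ / (1 + μ) ≤ 1 / n) (hR : ε + μ / (1 + μ) ≤ R) :
    ∃ δ > 0, ∀ v, ε + μ / (1 + μ) ≤ -v → -v ≤ R →
      δ ≤ 1 / n - rankOneCoeff μ v / diagCoeff μ v := by
  have hR0 : 0 < R := by linarith [div_nonneg hμ (by linarith : (0:ℝ) ≤ 1 + μ)]
  refine ⟨1 / n - μ / (1 + μ) * (1 - ((1 + μ) * R)⁻¹), ?_, fun v hv hvR => ?_⟩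
  · rcases hμ.eq_or_lt with rfl | hμ
    · simpa using hn
    · have : 0 < μ / (1 + μ) * ((1 + μ) * R)⁻¹ := by positivity
      linarith
  · linarith [rankOneCoeff_div_diagCoeff_le_of_le hμ hε hv hvR]

theorem inv_card_sub_le_one_sub_sum {ι : Type*} [Fintype ι] {r : ι → ℝ}
    (h : ∀ i, r i ≤ 1 / Fintype.card ι) (i₀ : ι) :
    1 / Fintype.card ι - r i₀ ≤ 1 - ∑ i, r i := by
  have hcard : (Fintype.card ι : ℝ) ≠ 0 :=
    Nat.cast_ne_zero.mpr (Fintype.card_pos_iff.mpr ⟨i₀⟩).ne'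
  have hsum : 1 - ∑ i, r i = ∑ i, (1 / Fintype.card ι - r i) := by
    rw [Finset.sum_sub_distrib, Finset.sum_const, Finset.card_univ, nsmul_eq_mul,
      mul_one_div_cancel hcard]
  rw [hsum]
  exact Finset.single_le_sum (fun i _ => sub_nonneg.mpr (h i)) (Finset.mem_univ i₀)

theorem exists_pos_le_one_sub_sum_rankOneCoeff_div_diagCoeff {N : ℕ} (hN : 2 ≤ N)
    {μ ε : Fin N → ℝ} (hμ : ∀ i, μ i ∈ Set.Icc (0:ℝ) (1 / ((N : ℝ) - 1))) (hε : ∀ i, 0 < ε i)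
    {i₀ : Fin N} {R : ℝ} (hR : ε i₀ + μ i₀ / (1 + μ i₀) ≤ R) :
    ∃ δ > 0, ∀ v : Fin N → ℝ, (∀ i, ε i + μ i / (1 + μ i) ≤ -v i) → -v i₀ ≤ R →
      δ ≤ 1 - ∑ i, rankOneCoeff (μ i) (v i) / diagCoeff (μ i) (v i) := by
  have hN' : (1 : ℝ) < N := by exact_mod_cast hN
  have hμN : ∀ i, μ i / (1 + μ i) ≤ 1 / N := fun i => div_one_add_le_inv_s5 (hμ i).1 hN' (hμ i).2
  obtain ⟨δ, hδ, hgap⟩ := exists_pos_le_inv_sub_rankOneCoeff_div_diagCoeff (hμ i₀).1 (hε i₀)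
    (by linarith) (hμN i₀) hR
  refine ⟨δ, hδ, fun v hv hvR => ?_⟩
  have hsum := inv_card_sub_le_one_sub_sum
    (r := fun i => rankOneCoeff (μ i) (v i) / diagCoeff (μ i) (v i)) (fun i =>
      (rankOneCoeff_div_diagCoeff_le (hμ i).1 (hε i) (hv i)).trans (by simpa using hμN i)) i₀
  rw [Fintype.card_fin] at hsum
  linarith [hgap (v i₀) (hv i₀) hvR]

theorem of_ite_eq_diagonal_sub_vecMulVec {n : Type*} [DecidableEq n] (μ v : n → ℝ) :
    Matrix.of (fun i j => if i = j then v i else -(v i) * μ i - μ i) =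
      diagonal (fun i => diagCoeff (μ i) (v i)) -
        vecMulVec (fun i => rankOneCoeff (μ i) (v i)) 1 := by
  ext i j
  by_cases h : i = j
  · subst h; simp [diagCoeff, rankOneCoeff]; ring
  · simp [h, rankOneCoeff]; ring

theorem isUnit_diagonal_sub_vecMulVec_and_sum_abs_inv_le {n : Type*} [Fintype n] [DecidableEq n]
    {μ ε v : n → ℝ} {δ : ℝ} (hμ : ∀ i, 0 ≤ μ i) (hε : ∀ i, 0 < ε i)
    (hv : ∀ i, ε i + μ i / (1 + μ i) ≤ -v i) (hδ : 0 < δ)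
    (hs : δ ≤ 1 - ∑ i, rankOneCoeff (μ i) (v i) / diagCoeff (μ i) (v i)) :
    let M := diagonal (fun i => diagCoeff (μ i) (v i)) -
      vecMulVec (fun i => rankOneCoeff (μ i) (v i)) 1
    IsUnit M ∧ ∀ i, ∑ k, |M⁻¹ i k| ≤ (1 + δ⁻¹ * (1 + ∑ k, 1 / ε k)) * ∑ k, 1 / ε k := by
  intro M
  have hd : ∀ i, diagCoeff (μ i) (v i) ≠ 0 := fun i => (diagCoeff_neg (hμ i) (hε i) (hv i)).ne
  set d := fun i => diagCoeff (μ i) (v i)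
  have hdot : 1 ⬝ᵥ ((fun i => rankOneCoeff (μ i) (v i)) / d) =
      ∑ i, rankOneCoeff (μ i) (v i) / diagCoeff (μ i) (v i) := one_dotProduct _
  have hlt : 1 ⬝ᵥ ((fun i => rankOneCoeff (μ i) (v i)) / d) < 1 := by rw [hdot]; linarith
  have hMB := diagonal_sub_vecMulVec_mul_eq_one hd hlt.ne
  refine ⟨(isUnit_iff_isUnit_det _).mpr (isUnit_det_of_right_inverse hMB), fun i => ?_⟩
  rw [inv_eq_right_inv hMB]
  have hE : 1 / ε i ≤ ∑ k, 1 / ε k :=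
    Finset.single_le_sum (fun k _ => (one_div_pos.mpr (hε k)).le) (Finset.mem_univ i)
  refine sum_abs_diagonal_inv_add_smul_vecMulVec_le hε
    (fun k => (le_neg_diagCoeff (hμ k) (hε k).le (hv k)).trans (neg_le_abs _)) i
    ((abs_rankOneCoeff_div_diagCoeff_le (hμ i) (hε i) (hv i)).trans (by linarith)) ?_
  rw [abs_inv, abs_of_pos (by linarith)]
  exact inv_anti₀ hδ (by rw [hdot]; linarith)

theorem stmt5 (N : ℕ) (hN : 2 ≤ N) (μ ε : Fin N → ℝ)
    (hμ : ∀ i, μ i ∈ Set.Icc (0:ℝ) (1 / ((N : ℝ) - 1)))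
    (hε : ∀ i, 0 < ε i)
    (i₀ : Fin N) (R : ℝ) (hR : ε i₀ + μ i₀ / (1 + μ i₀) ≤ R) :
    ∃ C > (0:ℝ), ∀ v : Fin N → ℝ,
      (ε i₀ + μ i₀ / (1 + μ i₀) ≤ -v i₀ ∧ -v i₀ ≤ R) →
      (∀ j, j ≠ i₀ → ε j + μ j / (1 + μ j) ≤ -v j) →
      IsUnit (Matrix.of fun i j => if i = j then v i else -(v i) * μ i - μ i) ∧
      infNorm (Matrix.of fun i j => if i = j then v i else -(v i) * μ i - μ i)⁻¹ ≤ C := by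
  obtain ⟨δ, hδ, hgap⟩ := exists_pos_le_one_sub_sum_rankOneCoeff_div_diagCoeff hN hμ hε hR
  have hE : 0 < ∑ k, 1 / ε k :=
    Finset.sum_pos (fun k _ => one_div_pos.mpr (hε k)) ⟨i₀, Finset.mem_univ i₀⟩
  refine ⟨(1 + δ⁻¹ * (1 + ∑ k, 1 / ε k)) * ∑ k, 1 / ε k, by positivity, fun v hv₀ hv => ?_⟩
  have hv' : ∀ i, ε i + μ i / (1 + μ i) ≤ -v i := fun i =>
    if h : i = i₀ then h ▸ hv₀.1 else hv i h
  obtain ⟨hunit, hrows⟩ := isUnit_diagonal_sub_vecMulVec_and_sum_abs_inv_le (fun i => (hμ i).1)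
    hε hv' hδ (hgap v hv' hv₀.2)
  rw [of_ite_eq_diagonal_sub_vecMulVec]
  exact ⟨hunit, infNorm_le_of_sum_abs_le (by positivity) hrows⟩
end

section
/- A continuously differentiable map f : ℝ^N → ℝ^N is a diffeomorphism (a bijection with differentiable inverse) if and only if f is proper and its Jacobian matrix Jf(x) is invertible at every point x ∈ ℝ^N. -/
/-!
By the inverse function theorem `f` is a local homeomorphism. A proper local homeomorphism has
compact discrete, hence finite, fibres and is a closed map, so it is a covering map; a covering of
the simply connected space `ℝ^N` by a connected space is a homeomorphism, and the inverse function
theorem makes its inverse differentiable. Conversely a homeomorphism is proper, and the chain rule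
applied to `g ∘ f = id` and `f ∘ g = id` shows that every derivative of `f` is invertible.
-/

open Function Topology Filter

section Covering

variable {E X : Type*} [TopologicalSpace E] [TopologicalSpace X]

theorem IsLocalHomeomorph.isCoveringMap_of_isProperMap [T2Space E] {f : E → X}
    (hf : IsLocalHomeomorph f) (hp : IsProperMap f) : IsCoveringMap f := by
  have finite_fibers (x : X) : (f ⁻¹' {x}).Finite :=
    (hp.isCompact_preimage isCompact_singleton).finite <|
      .of_openPartialHomeomorph f subset_rfl fun e _ ↦
        (hf e).imp fun φ hφ ↦ ⟨hφ.1, hφ.2.symm⟩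
  rw [isCoveringMap_iff_isCoveringMapOn_univ]
  exact hp.isClosedMap.isCoveringMapOn_of_isLocalHomeomorphOn (fun x _ ↦ finite_fibers x)
    (hf.isLocalHomeomorphOn.mono (Set.subset_univ _))

theorem IsCoveringMap.isHomeomorph_of_simplyConnected [PreconnectedSpace E] [Nonempty E]
    [SimplyConnectedSpace X] [LocallyPathConnectedSpace X] {p : E → X} (hp : IsCoveringMap p) :
    IsHomeomorph p := by
  obtain ⟨e₀⟩ := ‹Nonempty E›
  obtain ⟨g, ⟨hg₀, hpg⟩, -⟩ :=
    hp.existsUnique_continuousMap_lifts (ContinuousMap.id X) (p e₀) e₀ rfl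
  have hgp : g ∘ p = id :=
    hp.eq_of_comp_eq (g.continuous.comp hp.continuous) continuous_id
      (by rw [← comp_assoc, hpg]; rfl) e₀ hg₀
  exact isHomeomorph_iff_exists_inverse.mpr
    ⟨hp.continuous, g, congrFun hgp, congrFun hpg, g.continuous⟩

end Covering

section Calculus

variable {𝕜 : Type*} [NontriviallyNormedField 𝕜] {E F : Type*}
  [NormedAddCommGroup E] [NormedSpace 𝕜 E] [NormedAddCommGroup F] [NormedSpace 𝕜 F]

theorem ContinuousLinearMap.exists_continuousLinearEquiv_of_bijective [CompleteSpace E]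
    [CompleteSpace F] {L : E →L[𝕜] F} (hL : Bijective L) : ∃ e : E ≃L[𝕜] F, (e : E →L[𝕜] F) = L :=
  ⟨.ofBijective L (LinearMap.ker_eq_bot.mpr hL.1) (LinearMap.range_eq_top.mpr hL.2),
    ContinuousLinearEquiv.coe_ofBijective ..⟩

theorem Function.LeftInverse.bijective_fderiv {f : E → F} {g : F → E} (hgf : LeftInverse g f)
    (hfg : RightInverse g f) {x : E} (hf : DifferentiableAt 𝕜 f x)
    (hg : DifferentiableAt 𝕜 g (f x)) : Bijective (fderiv 𝕜 f x) := by
  have hgf' : (fderiv 𝕜 g (f x)).comp (fderiv 𝕜 f x) = .id 𝕜 E := by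
    have h := hg.hasFDerivAt.comp x hf.hasFDerivAt
    rw [hgf.comp_eq_id] at h
    exact h.unique (hasFDerivAt_id x)
  have hfg' : (fderiv 𝕜 f x).comp (fderiv 𝕜 g (f x)) = .id 𝕜 F := by
    have hf₂ : HasFDerivAt f (fderiv 𝕜 f x) (g (f x)) := by rw [hgf x]; exact hf.hasFDerivAt
    have h := hf₂.comp (f x) hg.hasFDerivAt
    rw [hfg.comp_eq_id] at h
    exact h.unique (hasFDerivAt_id (f x))
  exact ⟨LeftInverse.injective (g := fderiv 𝕜 g (f x)) fun v ↦ congr($hgf' v),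
    RightInverse.surjective (g := fderiv 𝕜 g (f x)) fun v ↦ congr($hfg' v)⟩

theorem Function.RightInverse.differentiable [CompleteSpace E] [CompleteSpace F]
    {f : E → F} {g : F → E} (hfg : RightInverse g f) (hf : Differentiable 𝕜 f)
    (hf' : ∀ x, Bijective (fderiv 𝕜 f x)) (hg : Continuous g) : Differentiable 𝕜 g := fun y ↦ by
  obtain ⟨L, hL⟩ := ContinuousLinearMap.exists_continuousLinearEquiv_of_bijective (hf' (g y))
  exact ((hL ▸ (hf (g y)).hasFDerivAt).of_local_left_inverse hg.continuousAt
    (.of_forall hfg)).differentiableAt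

end Calculus

theorem ContDiff.isLocalHomeomorph {𝕜 : Type*} [RCLike 𝕜] {E F : Type*}
    [NormedAddCommGroup E] [NormedSpace 𝕜 E] [CompleteSpace E] [NormedAddCommGroup F]
    [NormedSpace 𝕜 F] [CompleteSpace F] {f : E → F} (hf : ContDiff 𝕜 1 f)
    (hf' : ∀ x, Bijective (fderiv 𝕜 f x)) : IsLocalHomeomorph f := fun x ↦ by
  obtain ⟨L, hL⟩ := ContinuousLinearMap.exists_continuousLinearEquiv_of_bijective (hf' x)
  have hstrict : HasStrictFDerivAt f (L : E →L[𝕜] F) x :=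
    hL ▸ hf.contDiffAt.hasStrictFDerivAt one_ne_zero
  exact ⟨hstrict.toOpenPartialHomeomorph f, hstrict.mem_toOpenPartialHomeomorph_source,
    hstrict.toOpenPartialHomeomorph_coe.symm⟩

theorem stmt8 (N : ℕ) (f : (Fin N → ℝ) → (Fin N → ℝ)) (hf : ContDiff ℝ 1 f) :
    (Function.Bijective f ∧ Differentiable ℝ (Function.invFun f)) ↔
    (Filter.Tendsto f (Filter.cocompact (Fin N → ℝ)) (Filter.cocompact (Fin N → ℝ)) ∧
      ∀ x, Function.Bijective (fderiv ℝ f x)) := by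
  have hdiff : Differentiable ℝ f := hf.differentiable one_ne_zero
  constructor
  · rintro ⟨hbij, hinv⟩
    have hgf := leftInverse_invFun hbij.1
    have hfg := rightInverse_invFun hbij.2
    have hhomeo : IsHomeomorph f :=
      isHomeomorph_iff_exists_inverse.mpr ⟨hf.continuous, _, hgf, hfg, hinv.continuous⟩
    exact ⟨(isProperMap_iff_tendsto_cocompact.mp hhomeo.isProperMap).2,
      fun x ↦ hgf.bijective_fderiv hfg (hdiff x) (hinv _)⟩
  · rintro ⟨hcocompact, hf'⟩
    have hproper : IsProperMap f :=
      isProperMap_iff_tendsto_cocompact.mpr ⟨hf.continuous, hcocompact⟩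
    have hcover : IsCoveringMap f := (hf.isLocalHomeomorph hf').isCoveringMap_of_isProperMap hproper
    have hhomeo : IsHomeomorph f := hcover.isHomeomorph_of_simplyConnected
    obtain ⟨-, g, -, hfg, hg⟩ := isHomeomorph_iff_exists_inverse.mp hhomeo
    rw [invFun_eq_of_injective_of_rightInverse hhomeo.injective hfg]
    exact ⟨hhomeo.bijective, hfg.differentiable hdiff hf' hg⟩
end

section
/- Let (Ω,F,ℙ) be a probability space, Z a strictly positive random variable with E[Z] = 1, U a utility function satisfying the standard conditions, Ũ its conjugate, and L a strictly positive random variable with E[Z·L] < ∞. For x > 0 set C(x) = {g : Ω → [0,∞) measurable : E[Z·g] ≤ x}. Suppose g ∈ C(x) satisfies E[Z·g] = x and there exists a constant y > 0 such that U'(g/L) = y·L·Z ℙ-almost surely and E[Ũ⁺(y·L·Z)] < ∞. Then E[U(g/L)] < ∞ and g is the unique (up to ℙ-a.s. equality) maximizer of g̃ ↦ E[U(g̃/L)] over g̃ ∈ C(x). -/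
open MeasureTheory

/-- Generalized expectation `E[W] = E[W⁺] − E[W⁻]` valued in `EReal`, with the
convention that it equals `⊥` when both parts are infinite. -/
noncomputable def eExp {Ω : Type*} [MeasurableSpace Ω] (P : Measure Ω) (W : Ω → ℝ) : EReal :=
  (∫⁻ ω, ENNReal.ofReal (W ω) ∂P).toEReal - (∫⁻ ω, ENNReal.ofReal (-(W ω)) ∂P).toEReal

/-- The class `C(x)` of (strictly positive) claims affordable from initial wealth `x`:
`g ≥ 0` measurable with `E[Z·g] ≤ x`. -/
def inC {Ω : Type*} [MeasurableSpace Ω] (P : Measure Ω) (Z : Ω → ℝ) (x : ℝ) (g : Ω → ℝ) : Prop :=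
  Measurable g ∧ (∀ ω, 0 < g ω) ∧
    ∫⁻ ω, ENNReal.ofReal (Z ω * g ω) ∂P ≤ ENNReal.ofReal x

open MeasureTheory Set Filter
open scoped ENNReal

/-! At the tangency point `a = g / L`, where `U'(a) = y L Z`, the Fenchel inequality
`U(b) ≤ Ũ(U'(a)) + b U'(a)` is an equality, and strict concavity makes it strict for `b ≠ a`.
Hence `U(g' / L) ≤ Ũ(y L Z) + y Z g'` for every claim `g'`, with equality exactly where `g' = g`.
The right-hand side is integrable (`Ũ(y L Z)` is bounded below by `U(1) - y Z L`), and its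
expectation `E[Ũ(y L Z)] + y E[Z g']` is at most `E[Ũ(y L Z)] + y x = E[U(g / L)]`. -/

section Conjugate

variable {S : Set ℝ} {f : ℝ → ℝ} {U : ℝ → ℝ} {a b : ℝ}

lemma StrictConcaveOn.lt_add_deriv_mul_sub (hf : StrictConcaveOn ℝ S f) (ha : a ∈ S)
    (hb : b ∈ S) (hba : b ≠ a) (hfa : DifferentiableAt ℝ f a) :
    f b < f a + deriv f a * (b - a) := by
  rcases hba.lt_or_gt with hlt | hgt
  · have h := hf.deriv_lt_slope hb ha hlt hfa
    rw [slope_def_field, lt_div_iff₀ (sub_pos.mpr hlt)] at h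
    linarith
  · have h := hf.slope_lt_deriv ha hb hgt hfa
    rw [slope_def_field, div_lt_iff₀ (sub_pos.mpr hgt)] at h
    linarith

lemma conj_deriv_eq (hU : StrictConcaveOn ℝ (Ioi 0) U) (ha : 0 < a)
    (hd : DifferentiableAt ℝ U a) : conj U (deriv U a) = U a - a * deriv U a := by
  refine IsGreatest.csSup_eq ⟨⟨a, ha, rfl⟩, ?_⟩
  rintro _ ⟨b, hb, rfl⟩
  rcases eq_or_ne b a with rfl | hba
  · exact le_rfl
  · linarith [hU.lt_add_deriv_mul_sub ha hb hba hd]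

lemma le_conj_deriv_add_mul (hU : StrictConcaveOn ℝ (Ioi 0) U) (ha : 0 < a) (hb : 0 < b)
    (hd : DifferentiableAt ℝ U a) : U b ≤ conj U (deriv U a) + b * deriv U a := by
  rw [conj_deriv_eq hU ha hd]
  rcases eq_or_ne b a with rfl | hba
  · linarith
  · linarith [hU.lt_add_deriv_mul_sub ha hb hba hd]

lemma eq_of_eq_conj_deriv_add_mul (hU : StrictConcaveOn ℝ (Ioi 0) U) (ha : 0 < a) (hb : 0 < b)
    (hd : DifferentiableAt ℝ U a) (heq : U b = conj U (deriv U a) + b * deriv U a) : b = a := by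
  by_contra hba
  rw [conj_deriv_eq hU ha hd] at heq
  linarith [hU.lt_add_deriv_mul_sub ha hb hba hd]

end Conjugate

lemma ContinuousOn.comp_measurable {α β γ : Type*} [MeasurableSpace α] [TopologicalSpace β]
    [MeasurableSpace β] [OpensMeasurableSpace β] [TopologicalSpace γ] [MeasurableSpace γ]
    [BorelSpace γ] {U : β → γ} {s : Set β} (hU : ContinuousOn U s) {h : α → β}
    (hh : Measurable h) (hs : ∀ ω, h ω ∈ s) : Measurable fun ω => U (h ω) :=
  hU.domRestrict.measurable.comp (hh.subtype_mk (h := hs))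

lemma integrable_of_integrable_max_zero_of_ae_le {α : Type*} [MeasurableSpace α]
    {μ : Measure α} {f k : α → ℝ} (hf : AEStronglyMeasurable f μ)
    (hpos : Integrable (fun x => max (f x) 0) μ) (hk : Integrable k μ) (hkf : k ≤ᵐ[μ] f) :
    Integrable f μ := by
  refine (hpos.add hk.abs).mono' hf ?_
  filter_upwards [hkf] with x hx
  rw [Real.norm_eq_abs, abs_le, Pi.add_apply]
  constructor <;> linarith [le_max_left (f x) 0, le_max_right (f x) 0, neg_abs_le (k x),
    abs_nonneg (k x)]

section GeneralizedExpectation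

variable {Ω : Type*} [MeasurableSpace Ω] {P : Measure Ω} {f h : Ω → ℝ}

lemma eExp_eq_integral (hf : Integrable f P) : eExp P f = ((∫ ω, f ω ∂P : ℝ) : EReal) := by
  have hneg : ∫⁻ ω, ENNReal.ofReal (-f ω) ∂P ≠ ∞ := hf.neg.lintegral_lt_top.ne
  rw [eExp, integral_eq_lintegral_pos_part_sub_lintegral_neg_part hf, EReal.coe_sub,
    EReal.coe_ennreal_toReal hf.lintegral_lt_top.ne, EReal.coe_ennreal_toReal hneg]

lemma integrable_of_eExp_ne_bot (hf : AEStronglyMeasurable f P)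
    (hpos : ∫⁻ ω, ENNReal.ofReal (f ω) ∂P ≠ ∞) (hne : eExp P f ≠ ⊥) : Integrable f P := by
  have hneg : ∫⁻ ω, ENNReal.ofReal (-f ω) ∂P ≠ ∞ := by
    intro htop
    apply hne
    rw [eExp, htop, EReal.coe_ennreal_top, EReal.sub_top]
  have hint : ∀ {k : Ω → ℝ}, AEStronglyMeasurable k P → ∫⁻ ω, ENNReal.ofReal (k ω) ∂P ≠ ∞ →
      Integrable (fun ω => max (k ω) 0) P := fun hk hfin =>
    (lintegral_ofReal_ne_top_iff_integrable (by fun_prop)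
      (ae_of_all _ fun _ => le_max_right _ _)).mp (by simpa using hfin)
  exact ((hint hf hpos).sub (hint hf.neg hneg)).congr
    (ae_of_all _ fun ω => max_zero_sub_max_neg_zero_eq_self (f ω))

lemma integrable_of_ae_le_of_eExp_ne_bot (hf : AEStronglyMeasurable f P) (hh : Integrable h P)
    (hfh : f ≤ᵐ[P] h) (hne : eExp P f ≠ ⊥) : Integrable f P :=
  integrable_of_eExp_ne_bot hf
    ((lintegral_mono_ae (hfh.mono fun _ => ENNReal.ofReal_le_ofReal)).trans_lt
      hh.lintegral_lt_top).ne hne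

lemma eExp_le_integral_of_ae_le (hf : AEStronglyMeasurable f P) (hh : Integrable h P)
    (hfh : f ≤ᵐ[P] h) : eExp P f ≤ ((∫ ω, h ω ∂P : ℝ) : EReal) := by
  by_cases hbot : eExp P f = ⊥
  · exact hbot ▸ bot_le
  · have hfi := integrable_of_ae_le_of_eExp_ne_bot hf hh hfh hbot
    rw [eExp_eq_integral hfi]
    exact EReal.coe_le_coe_iff.mpr (integral_mono_ae hfi hh hfh)

lemma ae_eq_of_ae_le_of_eExp_eq_integral (hf : AEStronglyMeasurable f P) (hh : Integrable h P)
    (hfh : f ≤ᵐ[P] h) (heq : eExp P f = ((∫ ω, h ω ∂P : ℝ) : EReal)) : f =ᵐ[P] h := by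
  have hfi := integrable_of_ae_le_of_eExp_ne_bot hf hh hfh (heq ▸ EReal.coe_ne_bot _)
  rw [eExp_eq_integral hfi, EReal.coe_eq_coe_iff] at heq
  exact (integral_eq_iff_of_ae_le hfi hh hfh).mp heq

end GeneralizedExpectation

section Claims

variable {Ω : Type*} [MeasurableSpace Ω] {P : Measure Ω} {U : ℝ → ℝ} {Z L g g' : Ω → ℝ}
  {x y : ℝ}

lemma integrable_mul_of_inC (hZm : Measurable Z) (hZ : ∀ ω, 0 < Z ω) (hg : inC P Z x g) :
    Integrable (fun ω => Z ω * g ω) P :=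
  (lintegral_ofReal_ne_top_iff_integrable (hZm.mul hg.1).aestronglyMeasurable
    (ae_of_all _ fun ω => (mul_pos (hZ ω) (hg.2.1 ω)).le)).mp
    (hg.2.2.trans_lt ENNReal.ofReal_lt_top).ne

lemma integral_add_mul_le_of_inC {V : Ω → ℝ} (hV : Integrable V P) (hy : 0 ≤ y)
    (hZm : Measurable Z) (hZ : ∀ ω, 0 < Z ω) (hg' : inC P Z x g') (hg : inC P Z x g)
    (hbudget : ∫⁻ ω, ENNReal.ofReal (Z ω * g ω) ∂P = ENNReal.ofReal x) :
    ∫ ω, V ω + y * (Z ω * g' ω) ∂P ≤ ∫ ω, V ω + y * (Z ω * g ω) ∂P := by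
  rw [integral_add hV ((integrable_mul_of_inC hZm hZ hg').const_mul y),
    integral_add hV ((integrable_mul_of_inC hZm hZ hg).const_mul y), integral_const_mul,
    integral_const_mul,
    integral_eq_lintegral_of_nonneg_ae (ae_of_all _ fun ω => (mul_pos (hZ ω) (hg'.2.1 ω)).le)
      (hZm.mul hg'.1).aestronglyMeasurable,
    integral_eq_lintegral_of_nonneg_ae (ae_of_all _ fun ω => (mul_pos (hZ ω) (hg.2.1 ω)).le)
      (hZm.mul hg.1).aestronglyMeasurable, hbudget]
  exact add_le_add_right
    (mul_le_mul_of_nonneg_left (ENNReal.toReal_mono ENNReal.ofReal_ne_top hg'.2.2) hy) _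

lemma measurable_utility_of_inC (hU : ContinuousOn U (Ioi 0)) (hLm : Measurable L)
    (hL : ∀ ω, 0 < L ω) (hg : inC P Z x g) : Measurable fun ω => U (g ω / L ω) :=
  hU.comp_measurable (hg.1.div hLm) fun ω => div_pos (hg.2.1 ω) (hL ω)

lemma ae_fenchel_of_foc (hU : StrictConcaveOn ℝ (Ioi 0) U) (hZ : ∀ ω, 0 < Z ω)
    (hL : ∀ ω, 0 < L ω) (hy : 0 < y) (hg : ∀ ω, 0 < g ω)
    (hfoc : ∀ᵐ ω ∂P, deriv U (g ω / L ω) = y * L ω * Z ω) :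
    ∀ᵐ ω ∂P, ∀ b, 0 < b → U (b / L ω) ≤ conj U (y * L ω * Z ω) + y * (Z ω * b) ∧
      (U (b / L ω) = conj U (y * L ω * Z ω) + y * (Z ω * b) ↔ b = g ω) := by
  filter_upwards [hfoc] with ω hfoc b hb
  have ha : 0 < g ω / L ω := div_pos (hg ω) (hL ω)
  have hb' : 0 < b / L ω := div_pos hb (hL ω)
  -- `deriv` is `0` where `U` is not differentiable, so `U'(g / L) > 0` gives differentiability
  have hd : DifferentiableAt ℝ U (g ω / L ω) :=
    differentiableAt_of_deriv_ne_zero (hfoc ▸ (mul_pos (mul_pos hy (hL ω)) (hZ ω)).ne')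
  have hmul : ∀ c, y * (Z ω * c) = c / L ω * (y * L ω * Z ω) := fun c => by
    field_simp [(hL ω).ne']
  rw [hmul, ← hfoc]
  refine ⟨le_conj_deriv_add_mul hU ha hb' hd, fun h => ?_, ?_⟩
  · exact (div_left_inj' (hL ω).ne').mp (eq_of_eq_conj_deriv_add_mul hU ha hb' hd h)
  · rintro rfl
    rw [conj_deriv_eq hU ha hd]
    ring

lemma integrable_conj_of_foc [IsFiniteMeasure P] (hU : StrictConcaveOn ℝ (Ioi 0) U)
    (hZm : Measurable Z) (hZ : ∀ ω, 0 < Z ω) (hLm : Measurable L) (hL : ∀ ω, 0 < L ω)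
    (hZL : ∫⁻ ω, ENNReal.ofReal (Z ω * L ω) ∂P < ⊤) (hg : inC P Z x g) (hy : 0 < y)
    (hfoc : ∀ᵐ ω ∂P, deriv U (g ω / L ω) = y * L ω * Z ω)
    (hconj : Integrable (fun ω => max (conj U (y * L ω * Z ω)) 0) P) :
    Integrable (fun ω => conj U (y * L ω * Z ω)) P := by
  have hfen := ae_fenchel_of_foc hU hZ hL hy hg.2.1 hfoc
  have hZLi : Integrable (fun ω => Z ω * L ω) P :=
    (lintegral_ofReal_ne_top_iff_integrable (hZm.mul hLm).aestronglyMeasurable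
      (ae_of_all _ fun ω => (mul_pos (hZ ω) (hL ω)).le)).mp hZL.ne
  refine integrable_of_integrable_max_zero_of_ae_le ?_ hconj
    ((integrable_const (U 1)).sub (hZLi.const_mul y)) ?_
  · refine ((measurable_utility_of_inC (hU.concaveOn.continuousOn isOpen_Ioi) hLm hL hg).sub
      ((hZm.mul hg.1).const_mul y)).aestronglyMeasurable.congr ?_
    filter_upwards [hfen] with ω h
    show U (g ω / L ω) - y * (Z ω * g ω) = _
    linarith [(h (g ω) (hg.2.1 ω)).2.mpr rfl]
  · filter_upwards [hfen] with ω h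
    have h1 := (h (L ω) (hL ω)).1
    rw [div_self (hL ω).ne'] at h1
    show U 1 - y * (Z ω * L ω) ≤ _
    linarith

end Claims

theorem stmt9_general {Ω : Type*} [MeasurableSpace Ω] (P : Measure Ω) [IsProbabilityMeasure P]
    (Z : Ω → ℝ) (hZmeas : Measurable Z) (hZpos : ∀ ω, 0 < Z ω)
    (U : ℝ → ℝ)
    (hconc : StrictConcaveOn ℝ (Set.Ioi 0) U)
    (L : Ω → ℝ) (hLmeas : Measurable L) (hLpos : ∀ ω, 0 < L ω)
    (hLint : ∫⁻ ω, ENNReal.ofReal (Z ω * L ω) ∂P < ⊤)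
    (x : ℝ)
    (g : Ω → ℝ) (hg : inC P Z x g)
    (hbudget : ∫⁻ ω, ENNReal.ofReal (Z ω * g ω) ∂P = ENNReal.ofReal x)
    (y : ℝ) (hy : 0 < y)
    (hfoc : ∀ᵐ ω ∂P, deriv U (g ω / L ω) = y * L ω * Z ω)
    (hconjint : Integrable (fun ω => max (conj U (y * L ω * Z ω)) 0) P) :
    eExp P (fun ω => U (g ω / L ω)) < ⊤ ∧
    (∀ g' : Ω → ℝ, inC P Z x g' →
      eExp P (fun ω => U (g' ω / L ω)) ≤ eExp P (fun ω => U (g ω / L ω))) ∧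
    (∀ g' : Ω → ℝ, inC P Z x g' →
      eExp P (fun ω => U (g' ω / L ω)) = eExp P (fun ω => U (g ω / L ω)) →
      g' =ᵐ[P] g) := by
  have hfen := ae_fenchel_of_foc hconc hZpos hLpos hy hg.2.1 hfoc
  have hV := integrable_conj_of_foc hconc hZmeas hZpos hLmeas hLpos hLint hg hy hfoc hconjint
  have hdom : ∀ g', inC P Z x g' →
      Integrable (fun ω => conj U (y * L ω * Z ω) + y * (Z ω * g' ω)) P := fun g' hg' =>
    hV.add ((integrable_mul_of_inC hZmeas hZpos hg').const_mul y)
  have hle : ∀ g', inC P Z x g' → (fun ω => U (g' ω / L ω)) ≤ᵐ[P]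
      fun ω => conj U (y * L ω * Z ω) + y * (Z ω * g' ω) := fun g' hg' => by
    filter_upwards [hfen] with ω h using (h _ (hg'.2.1 ω)).1
  have hgeq : (fun ω => U (g ω / L ω)) =ᵐ[P]
      fun ω => conj U (y * L ω * Z ω) + y * (Z ω * g ω) := by
    filter_upwards [hfen] with ω h using (h _ (hg.2.1 ω)).2.mpr rfl
  have hUm : ∀ g', inC P Z x g' → AEStronglyMeasurable (fun ω => U (g' ω / L ω)) P :=
    fun g' hg' => (measurable_utility_of_inC (hconc.concaveOn.continuousOn isOpen_Ioi) hLmeas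
      hLpos hg').aestronglyMeasurable
  have hmax : ∀ g', inC P Z x g' → eExp P (fun ω => U (g' ω / L ω)) ≤
      ((∫ ω, conj U (y * L ω * Z ω) + y * (Z ω * g' ω) ∂P : ℝ) : EReal) := fun g' hg' =>
    eExp_le_integral_of_ae_le (hUm g' hg') (hdom g' hg') (hle g' hg')
  have hbound : ∀ g', inC P Z x g' →
      ∫ ω, conj U (y * L ω * Z ω) + y * (Z ω * g' ω) ∂P ≤ ∫ ω, U (g ω / L ω) ∂P :=
    fun g' hg' => (integral_add_mul_le_of_inC hV hy.le hZmeas hZpos hg' hg hbudget).trans_eq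
      (integral_congr_ae hgeq).symm
  rw [eExp_eq_integral ((hdom g hg).congr hgeq.symm)]
  refine ⟨EReal.coe_lt_top _, fun g' hg' => (hmax g' hg').trans (EReal.coe_le_coe_iff.mpr
    (hbound g' hg')), fun g' hg' heq => ?_⟩
  have hsharp := le_antisymm (hmax g' hg') (heq ▸ EReal.coe_le_coe_iff.mpr (hbound g' hg'))
  filter_upwards [ae_eq_of_ae_le_of_eExp_eq_integral (hUm g' hg') (hdom g' hg') (hle g' hg')
    hsharp, hfen] with ω h hω using (hω _ (hg'.2.1 ω)).2.mp h

theorem stmt9 {Ω : Type*} [MeasurableSpace Ω] (P : Measure Ω) [IsProbabilityMeasure P]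
    (Z : Ω → ℝ) (hZmeas : Measurable Z) (hZpos : ∀ ω, 0 < Z ω)
    (hZint : Integrable Z P) (hZ1 : ∫ ω, Z ω ∂P = 1)
    (U : ℝ → ℝ)
    (hmono : StrictMonoOn U (Set.Ioi 0))
    (hconc : StrictConcaveOn ℝ (Set.Ioi 0) U)
    (hsmooth : ContDiffOn ℝ 1 U (Set.Ioi 0))
    (hinada0 : Filter.Tendsto (deriv U) (nhdsWithin 0 (Set.Ioi 0)) Filter.atTop)
    (hinadaInf : Filter.Tendsto (deriv U) Filter.atTop (nhds 0))
    (L : Ω → ℝ) (hLmeas : Measurable L) (hLpos : ∀ ω, 0 < L ω)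
    (hLint : ∫⁻ ω, ENNReal.ofReal (Z ω * L ω) ∂P < ⊤)
    (x : ℝ) (hx : 0 < x)
    (g : Ω → ℝ) (hg : inC P Z x g)
    (hbudget : ∫⁻ ω, ENNReal.ofReal (Z ω * g ω) ∂P = ENNReal.ofReal x)
    (y : ℝ) (hy : 0 < y)
    (hfoc : ∀ᵐ ω ∂P, deriv U (g ω / L ω) = y * L ω * Z ω)
    (hconjint : Integrable (fun ω => max (conj U (y * L ω * Z ω)) 0) P) :
    eExp P (fun ω => U (g ω / L ω)) < ⊤ ∧
    (∀ g' : Ω → ℝ, inC P Z x g' →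
      eExp P (fun ω => U (g' ω / L ω)) ≤ eExp P (fun ω => U (g ω / L ω))) ∧
    (∀ g' : Ω → ℝ, inC P Z x g' →
      eExp P (fun ω => U (g' ω / L ω)) = eExp P (fun ω => U (g ω / L ω)) →
      g' =ᵐ[P] g) :=
  stmt9_general P Z hZmeas hZpos U hconc L hLmeas hLpos hLint x g hg hbudget y hy hfoc hconjint
end

section
/- Under Assumption (A) on the utilities and Assumption (Z) on the density, for every D = (D^1,…,D^N) ∈ ℝ^N, setting (X^{1,*},…,X^{N,*}) = H(D) = exp(G^{-1}(D + ln Z·𝟙)) and X̄^{i,*} = (∏_{j≠i} X^{j,*})^{1/(N−1)}, one has E[Ũ_i(exp(D^i)·Z·(X̄^{i,*})^{λ_i})] < ∞ for every i ∈ {1,…,N}. -/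
open MeasureTheory

/-- `H(D)(ω) = exp(G^{-1}(D + ln Z(ω)·𝟙))`, componentwise. -/
noncomputable def Hmap {Ω : Type*} {N : ℕ} (U : Fin N → ℝ → ℝ) (μ : Fin N → ℝ)
    (Z : Ω → ℝ) (D : Fin N → ℝ) (ω : Ω) : Fin N → ℝ :=
  fun i => Real.exp (Function.invFun (Gmap U μ) (fun j => D j + Real.log (Z ω)) i)

/-- Geometric average of the other players' terminal wealth:
`X̄^i = (∏_{j≠i} X^j)^{1/(N−1)}`. -/
noncomputable def xbar {Ω : Type*} {N : ℕ} (X : Fin N → Ω → ℝ) (i : Fin N) (ω : Ω) : ℝ :=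
  (∏ j ∈ Finset.univ.erase i, X j ω) ^ (((N : ℝ) - 1)⁻¹)

/-- Assumption (A) on the utility functions. -/
structure AssumpA {N : ℕ} (U : Fin N → ℝ → ℝ) (lam μ eps : Fin N → ℝ) : Prop where
  mono : ∀ i, StrictMonoOn (U i) (Set.Ioi 0)
  concave : ∀ i, StrictConcaveOn ℝ (Set.Ioi 0) (U i)
  smooth : ∀ i, ContDiffOn ℝ 2 (U i) (Set.Ioi 0)
  inada0 : ∀ i, Filter.Tendsto (deriv (U i)) (nhdsWithin 0 (Set.Ioi 0)) Filter.atTop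
  inadaInf : ∀ i, Filter.Tendsto (deriv (U i)) Filter.atTop (nhds 0)
  epsPos : ∀ i, 0 < eps i
  rraLB : ∀ i, ∀ x > 0, eps i + μ i / (1 + μ i) ≤ RRA (U i) x
  special : ∃ i, lam i < 1 ∨ ∃ R : ℝ, 0 < R ∧ ∀ x > 0, RRA (U i) x ≤ R

/-!
Write `ν_i = μ_i / (1 + μ_i)` and `W_i(t) = V_i(t) + ν_i t`. With `a_i = (1 + μ_i) y^i - μ_i S` and
`S = Σ_j y^j` one has `G^i(y) = W_i(a_i) - ν_i S`, and `RRA[U_i] ≥ ε_i + ν_i` gives `W_i' ≤ -ε_i`: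
each `W_i` is a decreasing bijection with `ε_i⁻¹`-Lipschitz inverse. So `G(y) = b` is equivalent to
`y^i = (W_i⁻¹(b^i + ν_i S) + μ_i S) / (1 + μ_i)` together with the scalar equation `S = Σ_j y^j`.
The defect `S - Σ_j y^j(S)` grows with slope at least `1 - Σ_j ν_j`, which is positive unless all
`λ_j = 1`, and then the player with bounded risk aversion supplies a positive slope instead. Hence
`G` is onto and `‖G⁻¹(b)‖ ≤ C (1 + ‖b‖)`, so the argument of `Ũ_i` is `e^q` with
`-q ≤ A + B |ln Z|`. Finally `RRA[U_i] ≥ ε_i` gives `U_i'(x) ≤ U_i'(1) x^{-ε_i}` for `x ≥ 1`, hence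
`Ũ_i(e^q) ≤ α + β e^{-q/ε_i} ≤ α' + β' max (Z^K) (Z^{-K})`, which is integrable by (Z).
-/

open Real Set Filter Topology Function

lemma ConcaveOn.le_add_deriv_mul_sub {S : Set ℝ} {f : ℝ → ℝ} {x x₀ : ℝ} (hf : ConcaveOn ℝ S f)
    (hx : x ∈ S) (hx₀ : x₀ ∈ S) (hd : DifferentiableAt ℝ f x₀) :
    f x ≤ f x₀ + deriv f x₀ * (x - x₀) := by
  rcases lt_trichotomy x x₀ with h | rfl | h
  · have := hf.deriv_le_slope hx hx₀ h hd
    rw [slope_def_field, le_div_iff₀ (sub_pos.2 h)] at this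
    linarith
  · simp
  · have := hf.slope_le_deriv hx₀ hx h hd
    rw [slope_def_field, div_le_iff₀ (sub_pos.2 h)] at this
    linarith

section Utility

variable {U : ℝ → ℝ}

lemma deriv_pos_of_RRA_pos (hmono : MonotoneOn U (Ioi 0))
    (hRRA : ∀ x > 0, 0 < RRA U x) {x : ℝ} (hx : 0 < x) : 0 < deriv U x := by
  have hnonneg : 0 ≤ deriv U x := by
    rw [← derivWithin_of_isOpen isOpen_Ioi hx]
    exact hmono.derivWithin_nonneg
  refine hnonneg.lt_of_ne fun h ↦ ?_
  simpa [RRA, ← h] using hRRA x hx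

lemma hasDerivAt_Vfun_s14 (hU : ContDiffOn ℝ 2 U (Ioi 0)) (hU' : ∀ x > 0, 0 < deriv U x) (t : ℝ) :
    HasDerivAt (Vfun U) (-RRA U (exp t)) t := by
  have hd : HasDerivAt (deriv U) (deriv (deriv U) (exp t)) (exp t) :=
    ((hU.deriv_of_isOpen (m := 1) isOpen_Ioi (by norm_num)).differentiableOn one_ne_zero _
      (exp_pos t) |>.differentiableAt (Ioi_mem_nhds (exp_pos t))).hasDerivAt
  convert ((hd.comp t (hasDerivAt_exp t)).log (hU' _ (exp_pos t)).ne') using 1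
  · rfl
  · simp only [RRA, comp_apply]
    ring

lemma deriv_le_mul_rpow_neg (hU : ContDiffOn ℝ 2 U (Ioi 0)) (hU' : ∀ x > 0, 0 < deriv U x)
    {δ : ℝ} (hRRA : ∀ x > 0, δ ≤ RRA U x) {x : ℝ} (hx : 1 ≤ x) :
    deriv U x ≤ deriv U 1 * x ^ (-δ) := by
  have hx0 : 0 < x := one_pos.trans_le hx
  have hV : Vfun U (log x) - Vfun U 0 ≤ -δ * (log x - 0) :=
    image_sub_le_mul_sub_of_deriv_le (fun t ↦ (hasDerivAt_Vfun_s14 hU hU' t).differentiableAt)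
      (fun t ↦ by rw [(hasDerivAt_Vfun_s14 hU hU' t).deriv]; linarith [hRRA _ (exp_pos t)])
      (log_nonneg hx)
  have hexpV : ∀ y > 0, exp (Vfun U (log y)) = deriv U y := fun y hy ↦ by
    rw [Vfun, exp_log hy, exp_log (hU' y hy)]
  rw [← hexpV x hx0, ← hexpV 1 one_pos, log_one, rpow_def_of_pos hx0, ← exp_add]
  exact exp_le_exp.2 (by linarith)

/-- At `x₀ = max 1 ((U'(1)/y)^{1/δ})` one has `U'(x₀) ≤ y`, so the tangent line of `U` at `x₀`
dominates `x ↦ U x - x y`. -/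
lemma conj_le_s14 (hU : ContDiffOn ℝ 2 U (Ioi 0)) (hconc : ConcaveOn ℝ (Ioi 0) U)
    (hU' : ∀ x > 0, 0 < deriv U x) {δ : ℝ} (hδ : 0 < δ) (hRRA : ∀ x > 0, δ ≤ RRA U x)
    {y : ℝ} (hy : 0 < y) :
    conj U y ≤ U 1 + deriv U 1 * (1 + (deriv U 1 / y) ^ δ⁻¹) := by
  set a := deriv U 1
  have ha : 0 < a := hU' 1 one_pos
  set x₀ := max 1 ((a / y) ^ δ⁻¹)
  have hx₀ : 1 ≤ x₀ := le_max_left _ _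
  have hx₀pos : 0 < x₀ := one_pos.trans_le hx₀
  have hdiff : ∀ x > 0, DifferentiableAt ℝ U x := fun x hx ↦
    (hU.differentiableOn (by norm_num) x hx).differentiableAt (Ioi_mem_nhds hx)
  have hderiv : deriv U x₀ ≤ y := by
    calc deriv U x₀ ≤ a * x₀ ^ (-δ) := deriv_le_mul_rpow_neg hU hU' hRRA hx₀
      _ ≤ a * ((a / y) ^ δ⁻¹) ^ (-δ) := by
          refine mul_le_mul_of_nonneg_left ?_ ha.le
          exact rpow_le_rpow_of_nonpos (rpow_pos_of_pos (div_pos ha hy) _) (le_max_right _ _)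
            (neg_nonpos.2 hδ.le)
      _ = y := by
          rw [← rpow_mul (div_pos ha hy).le, show δ⁻¹ * -δ = -1 by field_simp, rpow_neg_one,
            inv_div]
          field_simp
  have hsup : conj U y ≤ U x₀ := by
    refine csSup_le ⟨_, 1, mem_Ioi.2 one_pos, rfl⟩ ?_
    rintro _ ⟨x, hx, rfl⟩
    have := hconc.le_add_deriv_mul_sub hx hx₀pos (hdiff x₀ hx₀pos)
    nlinarith [mul_le_mul_of_nonneg_left hderiv (le_of_lt hx), hU' x₀ hx₀pos]
  have htangent := hconc.le_add_deriv_mul_sub hx₀pos (mem_Ioi.2 one_pos) (hdiff 1 one_pos)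
  have hx₀le : x₀ ≤ 1 + (a / y) ^ δ⁻¹ :=
    max_le (by linarith [rpow_nonneg (div_pos ha hy).le δ⁻¹]) (by linarith)
  nlinarith

lemma exists_conj_exp_le (hU : ContDiffOn ℝ 2 U (Ioi 0))
    (hconc : ConcaveOn ℝ (Ioi 0) U) (hU' : ∀ x > 0, 0 < deriv U x) {δ : ℝ} (hδ : 0 < δ)
    (hRRA : ∀ x > 0, δ ≤ RRA U x) :
    ∃ α β, 0 ≤ β ∧ ∀ q, conj U (exp q) ≤ α + β * exp (-(δ⁻¹ * q)) := by
  set a := deriv U 1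
  have ha : 0 < a := hU' 1 one_pos
  refine ⟨U 1 + a, a * a ^ δ⁻¹, by positivity, fun q ↦ ?_⟩
  have hpow : (a / exp q) ^ δ⁻¹ = a ^ δ⁻¹ * exp (-(δ⁻¹ * q)) := by
    rw [div_rpow ha.le (exp_pos q).le, ← exp_mul, exp_neg, div_eq_mul_inv, mul_comm q]
  have := conj_le_s14 hU hconc hU' hδ hRRA (exp_pos q)
  rw [hpow] at this
  linarith

end Utility

section Expanding

variable {f : ℝ → ℝ} {c : ℝ}

lemma surjective_of_mul_sub_le_sub (hf : Continuous f) (hc : 0 < c)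
    (h : ∀ s t, s ≤ t → c * (t - s) ≤ f t - f s) : Surjective f := by
  refine hf.surjective ?_ ?_
  · refine tendsto_atTop_mono' atTop ?_
      (tendsto_atTop_add_const_left _ (f 0) (tendsto_id.const_mul_atTop hc))
    filter_upwards [eventually_ge_atTop 0] with t ht
    show f 0 + c * t ≤ f t
    linarith [h 0 t ht]
  · refine tendsto_atBot_mono' atBot ?_
      (tendsto_atBot_add_const_left _ (f 0) (tendsto_id.const_mul_atBot hc))
    filter_upwards [eventually_le_atBot 0] with t ht
    show f t ≤ f 0 + c * t
    linarith [h t 0 ht]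

lemma mul_abs_sub_le_abs_sub (h : ∀ s t, s ≤ t → c * (t - s) ≤ f t - f s) (s t : ℝ) :
    c * |t - s| ≤ |f t - f s| := by
  rcases le_total s t with hst | hts
  · rw [abs_of_nonneg (sub_nonneg.2 hst)]
    exact (h s t hst).trans (le_abs_self _)
  · rw [abs_sub_comm, abs_of_nonneg (sub_nonneg.2 hts), abs_sub_comm]
    exact (h t s hts).trans (le_abs_self _)

end Expanding

section StronglyDecreasing

variable {W W' : ℝ → ℝ} {ε : ℝ}

lemma mul_sub_le_sub_of_deriv_le_neg (hW : ∀ t, HasDerivAt W (W' t) t) (hW' : ∀ t, W' t ≤ -ε)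
    {s t : ℝ} (hst : s ≤ t) : ε * (t - s) ≤ W s - W t := by
  have := image_sub_le_mul_sub_of_deriv_le (fun t ↦ (hW t).differentiableAt)
    (fun t ↦ (hW t).deriv ▸ hW' t) hst
  linarith

lemma mul_abs_sub_le_abs_sub_of_deriv_le_neg (hW : ∀ t, HasDerivAt W (W' t) t)
    (hW' : ∀ t, W' t ≤ -ε) (s t : ℝ) : ε * |t - s| ≤ |W t - W s| := by
  have := mul_abs_sub_le_abs_sub (f := fun t ↦ -W t) (c := ε)
    (fun s t h ↦ by linarith [mul_sub_le_sub_of_deriv_le_neg hW hW' h]) s t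
  rwa [neg_sub_neg, abs_sub_comm (W s)] at this

lemma bijective_of_deriv_le_neg (hW : ∀ t, HasDerivAt W (W' t) t) (hε : 0 < ε)
    (hW' : ∀ t, W' t ≤ -ε) : Bijective W := by
  refine ⟨fun s t hst ↦ ?_, fun u ↦ ?_⟩
  · have := mul_abs_sub_le_abs_sub_of_deriv_le_neg hW hW' t s
    rw [hst, sub_self, abs_zero] at this
    exact sub_eq_zero.1 (abs_nonpos_iff.1 (nonpos_of_mul_nonpos_right this hε))
  · obtain ⟨t, ht⟩ := surjective_of_mul_sub_le_sub (f := fun t ↦ -W t)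
      (continuous_iff_continuousAt.2 fun t ↦ (hW t).continuousAt.neg) hε
      (fun s t h ↦ by linarith [mul_sub_le_sub_of_deriv_le_neg hW hW' h]) (-u)
    exact ⟨t, neg_inj.1 ht⟩

lemma antitone_invFun_of_deriv_le_neg (hW : ∀ t, HasDerivAt W (W' t) t) (hε : 0 < ε)
    (hW' : ∀ t, W' t ≤ -ε) : Antitone (invFun W) := by
  have hinv := rightInverse_invFun (bijective_of_deriv_le_neg hW hε hW').2
  intro u v huv
  by_contra! hlt
  have := mul_sub_le_sub_of_deriv_le_neg hW hW' hlt.le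
  rw [hinv u, hinv v] at this
  nlinarith

lemma lipschitzWith_invFun_of_deriv_le_neg (hW : ∀ t, HasDerivAt W (W' t) t) (hε : 0 < ε)
    (hW' : ∀ t, W' t ≤ -ε) : LipschitzWith (Real.toNNReal ε⁻¹) (invFun W) := by
  have hinv := rightInverse_invFun (bijective_of_deriv_le_neg hW hε hW').2
  refine LipschitzWith.of_dist_le_mul fun u v ↦ ?_
  have := mul_abs_sub_le_abs_sub_of_deriv_le_neg hW hW' (invFun W v) (invFun W u)
  rw [hinv u, hinv v] at this
  rw [Real.dist_eq, Real.dist_eq, Real.coe_toNNReal _ (inv_nonneg.2 hε.le), inv_mul_eq_div,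
    le_div_iff₀' hε]
  exact this

lemma inv_mul_sub_le_invFun_sub_of_neg_le_deriv (hW : ∀ t, HasDerivAt W (W' t) t) (hε : 0 < ε)
    (hW' : ∀ t, W' t ≤ -ε) {R : ℝ} (hR : 0 < R) (hRW' : ∀ t, -R ≤ W' t) {u v : ℝ}
    (huv : u ≤ v) : R⁻¹ * (v - u) ≤ invFun W u - invFun W v := by
  have hinv := rightInverse_invFun (bijective_of_deriv_le_neg hW hε hW').2
  have := mul_sub_le_image_sub_of_le_deriv (fun t ↦ (hW t).differentiableAt)
    (fun t ↦ (hW t).deriv ▸ hRW' t) (antitone_invFun_of_deriv_le_neg hW hε hW' huv)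
  rw [hinv u, hinv v] at this
  rw [inv_mul_eq_div, div_le_iff₀' hR]
  linarith

end StronglyDecreasing

noncomputable def Wfun (U : ℝ → ℝ) (m t : ℝ) : ℝ := Vfun U t + m / (1 + m) * t

/-- The solution of `Gmap U μ y = b` once its aggregate `S = ∑ j, y j` is known
(see `Gmap_eq_iff`). -/
noncomputable def solOfSum {N : ℕ} (W : Fin N → ℝ → ℝ) (μ b : Fin N → ℝ) (S : ℝ) : Fin N → ℝ :=
  fun j ↦ (invFun (W j) (b j + μ j / (1 + μ j) * S) + μ j * S) / (1 + μ j)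

section Gmap

variable {N : ℕ} {U : Fin N → ℝ → ℝ} {μ : Fin N → ℝ}

lemma Gmap_apply_eq (hμ : ∀ j, 1 + μ j ≠ 0) (y : Fin N → ℝ) (i : Fin N) :
    Gmap U μ y i = Wfun (U i) (μ i) ((1 + μ i) * y i - μ i * ∑ j, y j)
      - μ i / (1 + μ i) * ∑ j, y j := by
  rw [Gmap, Wfun, Finset.sum_erase_eq_sub (Finset.mem_univ i)]
  have := hμ i
  field_simp
  ring_nf

lemma Gmap_eq_iff (hμ : ∀ j, 1 + μ j ≠ 0) (hW : ∀ j, Bijective (Wfun (U j) (μ j)))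
    {y b : Fin N → ℝ} :
    Gmap U μ y = b ↔ y = solOfSum (fun j ↦ Wfun (U j) (μ j)) μ b (∑ j, y j) := by
  simp only [funext_iff]
  refine forall_congr' fun j ↦ ?_
  have hinv : ∀ a c, Wfun (U j) (μ j) a = c ↔ a = invFun (Wfun (U j) (μ j)) c := fun a c ↦
    ⟨fun h ↦ h ▸ (leftInverse_invFun (hW j).1 a).symm,
      fun h ↦ h ▸ rightInverse_invFun (hW j).2 c⟩
  rw [Gmap_apply_eq hμ, solOfSum, sub_eq_iff_eq_add, hinv, eq_div_iff (hμ j)]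
  constructor <;> intro h <;> linarith

end Gmap

section solOfSum

variable {N : ℕ} {W : Fin N → ℝ → ℝ} {μ : Fin N → ℝ}

lemma continuous_solOfSum (hW : ∀ j, Continuous (invFun (W j))) (b : Fin N → ℝ) (j : Fin N) :
    Continuous fun S ↦ solOfSum W μ b S j := by
  unfold solOfSum
  fun_prop

lemma mul_sub_le_sub_sum_solOfSum (hμ : ∀ j, 0 ≤ μ j) (κ : Fin N → ℝ)
    (hκ : ∀ j u v, u ≤ v → κ j * (v - u) ≤ invFun (W j) u - invFun (W j) v)
    (b : Fin N → ℝ) {S T : ℝ} (hST : S ≤ T) :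
    (1 - ∑ j, μ j / (1 + μ j) + ∑ j, μ j / (1 + μ j) * κ j / (1 + μ j)) * (T - S)
      ≤ (T - ∑ j, solOfSum W μ b T j) - (S - ∑ j, solOfSum W μ b S j) := by
  have h1μ : ∀ j, 0 < 1 + μ j := fun j ↦ by linarith [hμ j]
  have hterm : ∀ j, μ j / (1 + μ j) * (T - S) - (solOfSum W μ b T j - solOfSum W μ b S j)
      = (invFun (W j) (b j + μ j / (1 + μ j) * S)
          - invFun (W j) (b j + μ j / (1 + μ j) * T)) / (1 + μ j) := fun j ↦ by
    have := (h1μ j).ne'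
    simp only [solOfSum]
    field_simp
    ring
  have hgap : ∀ j, μ j / (1 + μ j) * κ j / (1 + μ j) * (T - S)
      ≤ μ j / (1 + μ j) * (T - S) - (solOfSum W μ b T j - solOfSum W μ b S j) := fun j ↦ by
    rw [hterm, le_div_iff₀ (h1μ j)]
    calc _ = κ j * (b j + μ j / (1 + μ j) * T - (b j + μ j / (1 + μ j) * S)) := by
          field_simp [(h1μ j).ne']
          ring
      _ ≤ _ := hκ j _ _ (add_le_add_right
          (mul_le_mul_of_nonneg_left hST (div_nonneg (hμ j) (h1μ j).le)) (b j))
  calc (1 - ∑ j, μ j / (1 + μ j) + ∑ j, μ j / (1 + μ j) * κ j / (1 + μ j)) * (T - S)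
      ≤ (T - S) - ∑ j, μ j / (1 + μ j) * (T - S)
          + ∑ j, (μ j / (1 + μ j) * (T - S) - (solOfSum W μ b T j - solOfSum W μ b S j)) := by
        rw [add_mul, sub_mul, one_mul, Finset.sum_mul, Finset.sum_mul]
        gcongr with j
        exact hgap j
    _ = (T - ∑ j, solOfSum W μ b T j) - (S - ∑ j, solOfSum W μ b S j) := by
        rw [Finset.sum_sub_distrib, Finset.sum_sub_distrib]
        ring

lemma exists_abs_solOfSum_le (hμ : ∀ j, 0 ≤ μ j) {L : Fin N → NNReal}
    (hW : ∀ j, LipschitzWith (L j) (invFun (W j))) :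
    ∃ M, 0 ≤ M ∧ ∀ b S j, |solOfSum W μ b S j| ≤ M * (1 + ‖b‖ + |S|) := by
  refine ⟨∑ j, (|invFun (W j) 0| + L j + 1), by positivity, fun b S j ↦ ?_⟩
  have h1μ : 0 < 1 + μ j := by linarith [hμ j]
  set u := b j + μ j / (1 + μ j) * S
  have hu : |u| ≤ ‖b‖ + |S| := by
    refine (abs_add_le _ _).trans (add_le_add (by simpa using norm_le_pi_norm b j) ?_)
    rw [abs_mul, abs_of_nonneg (div_nonneg (hμ j) h1μ.le)]
    exact mul_le_of_le_one_left (abs_nonneg S) ((div_le_one h1μ).2 (by linarith))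
  have hinv : |invFun (W j) u| ≤ |invFun (W j) 0| + L j * (‖b‖ + |S|) := by
    have hlip := (hW j).dist_le_mul u 0
    rw [Real.dist_eq, Real.dist_eq, sub_zero] at hlip
    linarith [abs_sub_abs_le_abs_sub (invFun (W j) u) (invFun (W j) 0),
      mul_le_mul_of_nonneg_left hu (L j).coe_nonneg]
  have hsol : |solOfSum W μ b S j| ≤ |invFun (W j) u| + |S| := by
    rw [solOfSum, abs_div, abs_of_pos h1μ, div_le_iff₀ h1μ]
    have := abs_add_le (invFun (W j) u) (μ j * S)
    rw [abs_mul, abs_of_nonneg (hμ j)] at this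
    nlinarith [abs_nonneg (invFun (W j) u), abs_nonneg S, hμ j]
  have hsingle : |invFun (W j) 0| + L j + 1 ≤ ∑ j, (|invFun (W j) 0| + L j + 1) :=
    Finset.single_le_sum (f := fun j ↦ |invFun (W j) 0| + (L j : ℝ) + 1)
      (fun j _ ↦ by positivity) (Finset.mem_univ j)
  calc |solOfSum W μ b S j| ≤ (|invFun (W j) 0| + L j + 1) * (1 + ‖b‖ + |S|) := by
        nlinarith [abs_nonneg (invFun (W j) 0), norm_nonneg b, abs_nonneg S, (L j).coe_nonneg]
    _ ≤ _ := by gcongr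

lemma exists_norm_solOfSum_le (hμ : ∀ j, 0 ≤ μ j) {L : Fin N → NNReal}
    (hW : ∀ j, LipschitzWith (L j) (invFun (W j))) {c : ℝ} (hc : 0 < c)
    (hslope : ∀ b S T, S ≤ T →
      c * (T - S) ≤ (T - ∑ j, solOfSum W μ b T j) - (S - ∑ j, solOfSum W μ b S j)) :
    ∃ C, ∀ b S, ∑ j, solOfSum W μ b S j = S → ‖solOfSum W μ b S‖ ≤ C * (1 + ‖b‖) := by
  obtain ⟨M, hM0, hM⟩ := exists_abs_solOfSum_le hμ hW
  refine ⟨M * (1 + N * M / c), fun b S hS ↦ ?_⟩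
  have hsum0 : |∑ j, solOfSum W μ b 0 j| ≤ N * M * (1 + ‖b‖) := by
    calc _ ≤ ∑ j, |solOfSum W μ b 0 j| := Finset.abs_sum_le_sum_abs _ _
      _ ≤ ∑ _j : Fin N, M * (1 + ‖b‖) := by
          gcongr with j
          simpa using hM b 0 j
      _ = N * M * (1 + ‖b‖) := by simp [mul_assoc]
  have hSle : |S| ≤ N * M * (1 + ‖b‖) / c := by
    have := mul_abs_sub_le_abs_sub (hslope b) 0 S
    rw [hS, sub_self, sub_zero, zero_sub, zero_sub, abs_neg, abs_neg] at this
    rw [le_div_iff₀' hc]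
    exact this.trans hsum0
  refine (pi_norm_le_iff_of_nonneg (by positivity)).2 fun j ↦ ?_
  calc ‖solOfSum W μ b S j‖ ≤ M * (1 + ‖b‖ + |S|) := hM b S j
    _ ≤ M * (1 + ‖b‖ + N * M * (1 + ‖b‖) / c) := by gcongr
    _ = M * (1 + N * M / c) * (1 + ‖b‖) := by ring

end solOfSum

section Weights

variable {N : ℕ} {lam μ : Fin N → ℝ}

lemma mu_nonneg (hN : 2 ≤ N) (hlam : ∀ i, lam i ∈ Icc (0 : ℝ) 1)
    (hμ : ∀ i, μ i = lam i / ((N : ℝ) - 1)) (j : Fin N) : 0 ≤ μ j := by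
  have : (2 : ℝ) ≤ N := by exact_mod_cast hN
  rw [hμ j]
  exact div_nonneg (hlam j).1 (by linarith)

lemma sum_mu_div_one_add_mu_le_one (hN : 2 ≤ N) (hlam : ∀ i, lam i ∈ Icc (0 : ℝ) 1)
    (hμ : ∀ i, μ i = lam i / ((N : ℝ) - 1)) :
    ∑ j, μ j / (1 + μ j) ≤ 1 ∧ ((∃ j, lam j < 1) → ∑ j, μ j / (1 + μ j) < 1) := by
  have hN' : (2 : ℝ) ≤ N := by exact_mod_cast hN
  have hlam_eq : ∀ j, μ j * ((N : ℝ) - 1) = lam j := fun j ↦ by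
    rw [hμ j]
    field_simp [show (N : ℝ) - 1 ≠ 0 by linarith]
  have h1μ : ∀ j, 0 < 1 + μ j := fun j ↦ by linarith [mu_nonneg hN hlam hμ j]
  have hsum : ∑ _j : Fin N, (1 / N : ℝ) = 1 := by
    rw [Finset.sum_const, Finset.card_univ, Fintype.card_fin, nsmul_eq_mul]
    field_simp
  have hle : ∀ j, μ j / (1 + μ j) ≤ 1 / N := fun j ↦ by
    rw [div_le_div_iff₀ (h1μ j) (by positivity)]
    nlinarith [hlam_eq j, (hlam j).2]
  refine ⟨(Finset.sum_le_sum fun j _ ↦ hle j).trans_eq hsum, fun ⟨i, hi⟩ ↦ ?_⟩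
  refine (Finset.sum_lt_sum (fun j _ ↦ hle j) ⟨i, Finset.mem_univ i, ?_⟩).trans_eq hsum
  rw [div_lt_div_iff₀ (h1μ i) (by positivity)]
  nlinarith [hlam_eq i]

end Weights

namespace AssumpA

variable {N : ℕ} {U : Fin N → ℝ → ℝ} {lam μ eps : Fin N → ℝ}

lemma eps_le_RRA (hA : AssumpA U lam μ eps) (hμ : ∀ j, 0 ≤ μ j) (j : Fin N) {x : ℝ}
    (hx : 0 < x) : eps j ≤ RRA (U j) x := by
  have := hA.rraLB j x hx
  have : 0 ≤ μ j / (1 + μ j) := div_nonneg (hμ j) (by linarith [hμ j])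
  linarith

lemma deriv_pos (hA : AssumpA U lam μ eps) (hμ : ∀ j, 0 ≤ μ j) (j : Fin N) {x : ℝ}
    (hx : 0 < x) : 0 < deriv (U j) x :=
  deriv_pos_of_RRA_pos (hA.mono j).monotoneOn
    (fun _ hx ↦ (hA.epsPos j).trans_le (hA.eps_le_RRA hμ j hx)) hx

lemma hasDerivAt_Wfun (hA : AssumpA U lam μ eps) (hμ : ∀ j, 0 ≤ μ j) (j : Fin N) (t : ℝ) :
    HasDerivAt (Wfun (U j) (μ j)) (-RRA (U j) (exp t) + μ j / (1 + μ j)) t :=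
  (hasDerivAt_Vfun_s14 (hA.smooth j) (fun _ ↦ hA.deriv_pos hμ j) t).add
    ((hasDerivAt_id t).const_mul _ |>.congr_deriv (mul_one _))

lemma deriv_Wfun_le (hA : AssumpA U lam μ eps) (j : Fin N) (t : ℝ) :
    -RRA (U j) (exp t) + μ j / (1 + μ j) ≤ -eps j := by
  linarith [hA.rraLB j _ (exp_pos t)]

lemma bijective_Wfun (hA : AssumpA U lam μ eps) (hμ : ∀ j, 0 ≤ μ j) (j : Fin N) :
    Bijective (Wfun (U j) (μ j)) :=
  bijective_of_deriv_le_neg (hA.hasDerivAt_Wfun hμ j) (hA.epsPos j) (hA.deriv_Wfun_le j)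

lemma exists_pos_mul_sub_le_sub_sum_solOfSum (hA : AssumpA U lam μ eps) (hN : 2 ≤ N)
    (hlam : ∀ i, lam i ∈ Icc (0 : ℝ) 1) (hμ : ∀ i, μ i = lam i / ((N : ℝ) - 1)) :
    ∃ c > 0, ∀ b S T, S ≤ T → c * (T - S) ≤
      (T - ∑ j, solOfSum (fun j ↦ Wfun (U j) (μ j)) μ b T j)
        - (S - ∑ j, solOfSum (fun j ↦ Wfun (U j) (μ j)) μ b S j) := by
  have hμ0 := mu_nonneg hN hlam hμ
  have hW := hA.hasDerivAt_Wfun hμ0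
  have hanti : ∀ j u v, u ≤ v → 0 * (v - u) ≤
      invFun (Wfun (U j) (μ j)) u - invFun (Wfun (U j) (μ j)) v := fun j u v huv ↦ by
    rw [zero_mul, sub_nonneg]
    exact antitone_invFun_of_deriv_le_neg (hW j) (hA.epsPos j) (hA.deriv_Wfun_le j) huv
  obtain ⟨hσ, hσlt⟩ := sum_mu_div_one_add_mu_le_one hN hlam hμ
  obtain ⟨i, hi⟩ := hA.special
  rcases (hlam i).2.lt_or_eq with hlt | heq
  · refine ⟨1 - ∑ j, μ j / (1 + μ j), by linarith [hσlt ⟨i, hlt⟩], fun b S T hST ↦ ?_⟩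
    simpa using mul_sub_le_sub_sum_solOfSum hμ0 0 hanti b hST
  -- now `∑ j, μ j / (1 + μ j)` may be `1`; the slope comes from `W_i' ≥ -R`
  obtain ⟨R, hR, hRRA⟩ := hi.resolve_left (by rw [heq]; exact lt_irrefl 1)
  have hμi : 0 < μ i := by
    have : (2 : ℝ) ≤ N := by exact_mod_cast hN
    rw [hμ i, heq]
    exact div_pos one_pos (by linarith)
  have hκ : ∀ j u v, u ≤ v → (Pi.single i R⁻¹ : Fin N → ℝ) j * (v - u) ≤
      invFun (Wfun (U j) (μ j)) u - invFun (Wfun (U j) (μ j)) v := fun j u v huv ↦ by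
    rcases eq_or_ne j i with rfl | hj
    · rw [Pi.single_eq_same]
      refine inv_mul_sub_le_invFun_sub_of_neg_le_deriv (hW j) (hA.epsPos j)
        (hA.deriv_Wfun_le j) hR (fun t ↦ ?_) huv
      linarith [hRRA _ (exp_pos t), div_nonneg (hμ0 j) (by linarith : (0 : ℝ) ≤ 1 + μ j)]
    · rw [Pi.single_eq_of_ne hj]
      exact hanti j u v huv
  refine ⟨1 - ∑ j, μ j / (1 + μ j) + μ i / (1 + μ i) * R⁻¹ / (1 + μ i), ?_, fun b S T hST ↦ ?_⟩
  · have : 0 < μ i / (1 + μ i) * R⁻¹ / (1 + μ i) := by positivity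
    linarith
  · simpa [Pi.single_apply, ite_div] using mul_sub_le_sub_sum_solOfSum hμ0 _ hκ b hST

theorem exists_norm_invFun_Gmap_le (hA : AssumpA U lam μ eps) (hN : 2 ≤ N)
    (hlam : ∀ i, lam i ∈ Icc (0 : ℝ) 1) (hμ : ∀ i, μ i = lam i / ((N : ℝ) - 1)) :
    ∃ C, ∀ b, ‖invFun (Gmap U μ) b‖ ≤ C * (1 + ‖b‖) := by
  have hμ0 := mu_nonneg hN hlam hμ
  have h1μ : ∀ j, 1 + μ j ≠ 0 := fun j ↦ by linarith [hμ0 j]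
  have hLip := fun j ↦ lipschitzWith_invFun_of_deriv_le_neg (hA.hasDerivAt_Wfun hμ0 j)
    (hA.epsPos j) (hA.deriv_Wfun_le j)
  obtain ⟨c, hc, hslope⟩ := hA.exists_pos_mul_sub_le_sub_sum_solOfSum hN hlam hμ
  obtain ⟨C, hC⟩ := exists_norm_solOfSum_le hμ0 hLip hc hslope
  refine ⟨C, fun b ↦ ?_⟩
  obtain ⟨S, hS⟩ := surjective_of_mul_sub_le_sub
    (f := fun S ↦ S - ∑ j, solOfSum (fun j ↦ Wfun (U j) (μ j)) μ b S j)
    (continuous_id.sub (continuous_finsetSum _ fun j _ ↦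
      continuous_solOfSum (fun j ↦ (hLip j).continuous) b j)) hc (hslope b) 0
  have hpre : Gmap U μ (solOfSum (fun j ↦ Wfun (U j) (μ j)) μ b S) = b := by
    rw [Gmap_eq_iff h1μ (hA.bijective_Wfun hμ0), ← sub_eq_zero.1 hS]
  have hinv := (Gmap_eq_iff h1μ (hA.bijective_Wfun hμ0)).1 (invFun_eq ⟨_, hpre⟩)
  rw [hinv]
  exact hC b _ (by rw [← hinv])

end AssumpA

section Expectation

variable {Ω : Type*} [MeasurableSpace Ω] {P : Measure Ω}

lemma eExp_lt_top_of_le {W g : Ω → ℝ} (hg : Integrable g P) (hWg : ∀ ω, W ω ≤ g ω) :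
    eExp P W < ⊤ := by
  have hlt : ∫⁻ ω, ENNReal.ofReal (W ω) ∂P < ⊤ :=
    (lintegral_mono fun ω ↦ ENNReal.ofReal_le_ofReal (hWg ω)).trans_lt hg.lintegral_lt_top
  rw [eExp, sub_eq_add_neg]
  exact EReal.add_lt_top (by simpa using hlt.ne) (by simp)

lemma integrable_exp_abs_mul_log {Z : Ω → ℝ} (hZ : ∀ ω, 0 < Z ω)
    (hmom : ∀ r : ℝ, Integrable (fun ω ↦ Z ω ^ r) P) (K : ℝ) :
    Integrable (fun ω ↦ exp |K * log (Z ω)|) P := by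
  refine ((hmom K).sup (hmom (-K))).congr (Eventually.of_forall fun ω ↦ ?_)
  simp only [Pi.sup_apply, rpow_def_of_pos (hZ ω), abs_eq_max_neg, exp_monotone.map_max]
  ring_nf

end Expectation

lemma xbar_exp {Ω : Type*} {N : ℕ} (x : Fin N → Ω → ℝ) (i : Fin N) (ω : Ω) :
    xbar (fun j ω ↦ exp (x j ω)) i ω
      = exp (((N : ℝ) - 1)⁻¹ * ∑ j ∈ Finset.univ.erase i, x j ω) := by
  rw [xbar, ← exp_sum, ← exp_mul, mul_comm]

lemma abs_inv_mul_sum_erase_le_norm {N : ℕ} (hN : 2 ≤ N) (y : Fin N → ℝ) (i : Fin N) :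
    |((N : ℝ) - 1)⁻¹ * ∑ j ∈ Finset.univ.erase i, y j| ≤ ‖y‖ := by
  have hN' : (0 : ℝ) < (N : ℝ) - 1 := by
    have : (2 : ℝ) ≤ N := by exact_mod_cast hN
    linarith
  have hcard : ((Finset.univ.erase i).card : ℝ) = (N : ℝ) - 1 := by
    rw [Finset.card_erase_of_mem (Finset.mem_univ i), Finset.card_univ, Fintype.card_fin,
      Nat.cast_sub (by omega), Nat.cast_one]
  rw [abs_mul, abs_inv, abs_of_pos hN', inv_mul_le_iff₀ hN']
  calc |∑ j ∈ Finset.univ.erase i, y j| ≤ ∑ j ∈ Finset.univ.erase i, ‖y‖ :=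
        (Finset.abs_sum_le_sum_abs _ _).trans
          (Finset.sum_le_sum fun j _ ↦ by simpa using norm_le_pi_norm y j)
    _ = ((N : ℝ) - 1) * ‖y‖ := by rw [Finset.sum_const, nsmul_eq_mul, hcard]

lemma AssumpA.exists_arg_eq_exp {Ω : Type*} {Z : Ω → ℝ} (hZpos : ∀ ω, 0 < Z ω) {N : ℕ}
    (hN : 2 ≤ N) {U : Fin N → ℝ → ℝ} {lam μ eps : Fin N → ℝ} (hlam : ∀ i, lam i ∈ Icc (0 : ℝ) 1)
    (hμ : ∀ i, μ i = lam i / ((N : ℝ) - 1)) (hA : AssumpA U lam μ eps) (D : Fin N → ℝ)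
    (i : Fin N) :
    ∃ A B, 0 ≤ B ∧ ∀ ω, ∃ q, -q ≤ A + B * |log (Z ω)| ∧
      exp (D i) * Z ω * xbar (fun j ω' ↦ Hmap U μ Z D ω' j) i ω ^ lam i = exp q := by
  obtain ⟨C, hC⟩ := hA.exists_norm_invFun_Gmap_le hN hlam hμ
  have hC0 : 0 ≤ C := by simpa using (norm_nonneg (invFun (Gmap U μ) 0)).trans (hC 0)
  refine ⟨|D i| + C * (1 + ‖D‖), 1 + C, by linarith, fun ω ↦ ?_⟩
  set y := invFun (Gmap U μ) (fun j ↦ D j + log (Z ω))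
  have hy : ‖y‖ ≤ C * (1 + ‖D‖ + |log (Z ω)|) := by
    have hb : ‖fun j ↦ D j + log (Z ω)‖ ≤ ‖D‖ + |log (Z ω)| :=
      (pi_norm_le_iff_of_nonneg (by positivity)).2 fun j ↦ (norm_add_le (D j) _).trans
        (by rw [Real.norm_eq_abs (log _)]; linarith [norm_le_pi_norm D j])
    exact (hC _).trans (mul_le_mul_of_nonneg_left (by linarith) hC0)
  have havg : |lam i * (((N : ℝ) - 1)⁻¹ * ∑ j ∈ Finset.univ.erase i, y j)| ≤ ‖y‖ := by
    rw [abs_mul, abs_of_nonneg (hlam i).1]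
    exact (mul_le_of_le_one_left (abs_nonneg _) (hlam i).2).trans
      (abs_inv_mul_sum_erase_le_norm hN y i)
  refine ⟨D i + log (Z ω) + lam i * (((N : ℝ) - 1)⁻¹ * ∑ j ∈ Finset.univ.erase i, y j), ?_, ?_⟩
  · linarith [neg_abs_le (D i), neg_abs_le (log (Z ω)), (abs_le.1 havg).1]
  · rw [show xbar (fun j ω' ↦ Hmap U μ Z D ω' j) i ω = _ from xbar_exp _ i ω, ← exp_mul,
      exp_add, exp_add, exp_log (hZpos ω), mul_comm (lam i)]

theorem stmt14_general {Ω : Type*} [MeasurableSpace Ω] (P : Measure Ω) [IsProbabilityMeasure P]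
    (Z : Ω → ℝ) (hZpos : ∀ ω, 0 < Z ω)
    (hZmom : ∀ r : ℝ, Integrable (fun ω => Z ω ^ r) P)
    (N : ℕ) (hN : 2 ≤ N) (U : Fin N → ℝ → ℝ) (lam μ eps : Fin N → ℝ)
    (hlam : ∀ i, lam i ∈ Set.Icc (0:ℝ) 1)
    (hμ : ∀ i, μ i = lam i / ((N : ℝ) - 1))
    (hA : AssumpA U lam μ eps)
    (D : Fin N → ℝ) :
    ∀ i, eExp P (fun ω => conj (U i)
        (Real.exp (D i) * Z ω *
          (xbar (fun j ω' => Hmap U μ Z D ω' j) i ω) ^ (lam i))) < ⊤ := by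
  intro i
  have hμ0 := mu_nonneg hN hlam hμ
  have hε := inv_pos.2 (hA.epsPos i)
  obtain ⟨α, β, hβ, hconj⟩ := exists_conj_exp_le (hA.smooth i) (hA.concave i).concaveOn
    (fun _ ↦ hA.deriv_pos hμ0 i) (hA.epsPos i) (fun _ ↦ hA.eps_le_RRA hμ0 i)
  obtain ⟨A, B, hB, harg⟩ := hA.exists_arg_eq_exp hZpos hN hlam hμ D i
  refine eExp_lt_top_of_le ((integrable_const α).add ((integrable_exp_abs_mul_log hZpos hZmom
    ((eps i)⁻¹ * B)).const_mul (β * exp ((eps i)⁻¹ * A)))) fun ω ↦ ?_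
  obtain ⟨q, hq, hqeq⟩ := harg ω
  rw [hqeq]
  calc conj (U i) (exp q) ≤ α + β * exp (-((eps i)⁻¹ * q)) := hconj q
    _ ≤ α + β * exp ((eps i)⁻¹ * A + |(eps i)⁻¹ * B * log (Z ω)|) := by
        gcongr
        rw [abs_mul, abs_mul, abs_of_pos hε, abs_of_nonneg hB]
        nlinarith [mul_le_mul_of_nonneg_left hq hε.le]
    _ = _ := by rw [Pi.add_apply, exp_add]; ring

theorem stmt14 {Ω : Type*} [MeasurableSpace Ω] (P : Measure Ω) [IsProbabilityMeasure P]
    (Z : Ω → ℝ) (hZmeas : Measurable Z) (hZpos : ∀ ω, 0 < Z ω)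
    (hZ1 : ∫ ω, Z ω ∂P = 1)
    (hZmom : ∀ r : ℝ, Integrable (fun ω => Z ω ^ r) P)
    (N : ℕ) (hN : 2 ≤ N) (U : Fin N → ℝ → ℝ) (lam μ eps : Fin N → ℝ)
    (hlam : ∀ i, lam i ∈ Set.Icc (0:ℝ) 1)
    (hμ : ∀ i, μ i = lam i / ((N : ℝ) - 1))
    (hA : AssumpA U lam μ eps)
    (D : Fin N → ℝ) :
    ∀ i, eExp P (fun ω => conj (U i)
        (Real.exp (D i) * Z ω *
          (xbar (fun j ω' => Hmap U μ Z D ω' j) i ω) ^ (lam i))) < ⊤ :=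
  stmt14_general P Z hZpos hZmom N hN U lam μ eps hlam hμ hA D
end
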